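/- arXiv:1502.03571 — 5 statements merged into one kernel-verified Lean document; each statement's English description precedes it below -/
import Mathlib

section
/- Let p ∈ [1,∞), let A ∈ ℝ^{n×d} have full column rank, and let S ∈ ℝ^{s×n} satisfy σ_S‖Ax‖_p ≤ ‖SAx‖_p ≤ κ_S σ_S‖Ax‖_p for all x ∈ ℝ^d, where σ_S > 0 and κ_S ≥ 1. Let SA = QR be a QR factorization with Q ∈ ℝ^{s×d} having orthonormal columns and R ∈ ℝ^{d×d} invertible. Then the matrix U = AR⁻¹ is (α,β,p)-conditioned for some α,β with αβ ≤ κ_S · d^{max(1/2, 1/p)} · s^{|1/p − 1/2|}. -/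
/-! With `U = A R⁻¹` we have `S U = Q`, so the sketch bounds read
`σ ‖U x‖_p ≤ ‖Q x‖_p ≤ κ σ ‖U x‖_p`, and `Q` preserves the `ℓ_2` norm. On `ℝ^m`, passing from
the `ℓ_b` to the `ℓ_a` norm costs at most a factor `m ^ (1/a - 1/b)⁺` (Hölder). Hence each
column `U e_j` has `ℓ_p` norm at most `‖Q e_j‖_p / σ ≤ s ^ (1/p - 1/2)⁺ / σ`, so
`|U|_p ≤ d ^ (1/p) s ^ (1/p - 1/2)⁺ / σ`; and, with `t = (1/2 - 1/p)⁺`,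
`‖x‖_q ≤ d ^ t ‖Q x‖_2 ≤ (d s) ^ t ‖Q x‖_p ≤ κ σ (d s) ^ t ‖U x‖_p`.
Multiplying, `σ` cancels and the exponents add up to `max (1/2) (1/p)` and `|1/p - 1/2|`. -/

open Matrix Finset

/-- The entrywise `ℓ_p` norm of a vector: `‖v‖_p = (∑ i, |v i|^p)^(1/p)`. -/
noncomputable def vecLpNorm (p : ℝ) {m : ℕ} (v : Fin m → ℝ) : ℝ :=
  (∑ i, |v i| ^ p) ^ (1 / p)

/-- The norm dual to the `ℓ_p` norm, i.e. the `ℓ_q` norm with `1/p + 1/q = 1`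
(the `ℓ_∞` norm when `p = 1`). -/
noncomputable def vecDualNorm (p : ℝ) {m : ℕ} (v : Fin m → ℝ) : ℝ :=
  if p = 1 then ⨆ i, |v i| else vecLpNorm (p / (p - 1)) v

/-- The entrywise `ℓ_p` norm of a matrix: `|M|_p = (∑ i j, |M i j|^p)^(1/p)`. -/
noncomputable def matEntryLpNorm (p : ℝ) {m k : ℕ} (M : Matrix (Fin m) (Fin k) ℝ) : ℝ :=
  (∑ i, ∑ j, |M i j| ^ p) ^ (1 / p)

/-- `U` is `(α, β, p)`-conditioned if `|U|_p ≤ α` and `‖x‖_q ≤ β ‖U x‖_p` for all `x`,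
where `q` is the conjugate exponent of `p` (the constant `β` being nonnegative). -/
def IsConditioned (p : ℝ) {m k : ℕ} (α β : ℝ) (U : Matrix (Fin m) (Fin k) ℝ) : Prop :=
  0 ≤ β ∧ matEntryLpNorm p U ≤ α ∧
    ∀ x : Fin k → ℝ, vecDualNorm p x ≤ β * vecLpNorm p (U *ᵥ x)

lemma vecLpNorm_nonneg (p : ℝ) {m : ℕ} (v : Fin m → ℝ) : 0 ≤ vecLpNorm p v := by
  unfold vecLpNorm; positivity

lemma abs_le_vecLpNorm {p : ℝ} (hp : 0 < p) {m : ℕ} (v : Fin m → ℝ) (i : Fin m) :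
    |v i| ≤ vecLpNorm p v := by
  calc |v i| = (|v i| ^ p) ^ (1 / p) := by
        rw [← Real.rpow_mul (abs_nonneg _), mul_one_div_cancel hp.ne', Real.rpow_one]
    _ ≤ vecLpNorm p v := by
      unfold vecLpNorm
      gcongr
      exact single_le_sum (f := fun j => |v j| ^ p) (fun j _ => by positivity) (mem_univ i)

theorem Finset.sum_rpow_le_rpow_sum {ι : Type*} (s : Finset ι) {f : ι → ℝ}
    (hf : ∀ i ∈ s, 0 ≤ f i) {r : ℝ} (hr : 1 ≤ r) :
    ∑ i ∈ s, f i ^ r ≤ (∑ i ∈ s, f i) ^ r := by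
  induction s using Finset.cons_induction with
  | empty => simp [Real.zero_rpow (by linarith : r ≠ 0)]
  | cons a s ha ih =>
    simp only [forall_mem_cons] at hf
    rw [sum_cons, sum_cons]
    calc f a ^ r + ∑ i ∈ s, f i ^ r ≤ f a ^ r + (∑ i ∈ s, f i) ^ r := by
          gcongr; exact ih hf.2
      _ ≤ _ := Real.add_rpow_le_rpow_add hf.1 (sum_nonneg hf.2) hr

section ExponentChange

variable {m : ℕ} {a b : ℝ} (v : Fin m → ℝ)

lemma vecLpNorm_eq_rpow_sum_rpow (ha : 0 < a) :
    vecLpNorm b v = (∑ i, (|v i| ^ a) ^ (b / a)) ^ (1 / b) := by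
  unfold vecLpNorm
  congr 1
  refine sum_congr rfl fun i _ => ?_
  rw [← Real.rpow_mul (abs_nonneg _), mul_div_cancel₀ _ ha.ne']

lemma vecLpNorm_eq_rpow_rpow_sum (ha : 0 < a) (hb : 0 < b) :
    vecLpNorm a v = ((∑ i, |v i| ^ a) ^ (b / a)) ^ (1 / b) := by
  unfold vecLpNorm
  rw [← Real.rpow_mul (by positivity)]
  congr 1
  field_simp

lemma vecLpNorm_le_of_le (ha : 0 < a) (hab : a ≤ b) : vecLpNorm b v ≤ vecLpNorm a v := by
  have hb := ha.trans_le hab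
  rw [vecLpNorm_eq_rpow_sum_rpow v ha, vecLpNorm_eq_rpow_rpow_sum v ha hb]
  gcongr
  exact sum_rpow_le_rpow_sum _ (fun i _ => by positivity) ((one_le_div ha).mpr hab)

lemma vecLpNorm_le_card_rpow_mul_of_le (ha : 0 < a) (hab : a ≤ b) :
    vecLpNorm a v ≤ (m : ℝ) ^ (1 / a - 1 / b) * vecLpNorm b v := by
  have hb := ha.trans_le hab
  have hm : (0 : ℝ) ≤ m := m.cast_nonneg
  have hpow : ((m : ℝ) ^ (b / a - 1)) ^ (1 / b) = (m : ℝ) ^ (1 / a - 1 / b) := by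
    rw [← Real.rpow_mul hm]; congr 1; field_simp
  calc vecLpNorm a v = ((∑ i, |v i| ^ a) ^ (b / a)) ^ (1 / b) :=
        vecLpNorm_eq_rpow_rpow_sum v ha hb
    _ ≤ ((m : ℝ) ^ (b / a - 1) * ∑ i, (|v i| ^ a) ^ (b / a)) ^ (1 / b) := by
      gcongr
      simpa using Real.rpow_sum_le_const_mul_sum_rpow_of_nonneg univ ((one_le_div ha).mpr hab)
        (fun i _ => by positivity : ∀ i ∈ univ, 0 ≤ |v i| ^ a)
    _ = (m : ℝ) ^ (1 / a - 1 / b) * vecLpNorm b v := by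
      rw [Real.mul_rpow (by positivity) (by positivity), hpow, vecLpNorm_eq_rpow_sum_rpow v ha]

lemma vecLpNorm_le_card_rpow_mul (ha : 0 < a) (hb : 0 < b) :
    vecLpNorm a v ≤ (m : ℝ) ^ max 0 (1 / a - 1 / b) * vecLpNorm b v := by
  rcases le_total a b with hab | hba
  · rw [max_eq_right (sub_nonneg.mpr (one_div_le_one_div_of_le ha hab))]
    exact vecLpNorm_le_card_rpow_mul_of_le v ha hab
  · rw [max_eq_left (sub_nonpos.mpr (one_div_le_one_div_of_le hb hba)), Real.rpow_zero, one_mul]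
    exact vecLpNorm_le_of_le v hb hba

end ExponentChange

lemma vecDualNorm_le_card_rpow_mul_vecLpNorm_two {p : ℝ} (hp : 1 ≤ p) {m : ℕ}
    (x : Fin m → ℝ) :
    vecDualNorm p x ≤ (m : ℝ) ^ max 0 (1 / 2 - 1 / p) * vecLpNorm 2 x := by
  unfold vecDualNorm
  split_ifs with hp1
  · subst hp1
    rw [show max (0 : ℝ) (1 / 2 - 1 / 1) = 0 by norm_num, Real.rpow_zero, one_mul]
    exact Real.iSup_le (abs_le_vecLpNorm two_pos x) (vecLpNorm_nonneg 2 x)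
  · have hp1 : 1 < p := lt_of_le_of_ne hp (Ne.symm hp1)
    have hq : 1 / (p / (p - 1)) - 1 / 2 = 1 / 2 - 1 / p := by
      field_simp; ring
    rw [← hq]
    exact vecLpNorm_le_card_rpow_mul x (div_pos (by linarith) (by linarith)) two_pos

lemma vecLpNorm_two_eq_sqrt_dotProduct {m : ℕ} (v : Fin m → ℝ) :
    vecLpNorm 2 v = √(v ⬝ᵥ v) := by
  unfold vecLpNorm dotProduct
  rw [Real.sqrt_eq_rpow, one_div]
  congr 1
  refine sum_congr rfl fun i _ => ?_
  rw [Real.rpow_two, sq_abs, sq]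

lemma vecLpNorm_two_mulVec_of_transpose_mul_self {s d : ℕ} {Q : Matrix (Fin s) (Fin d) ℝ}
    (hQ : Qᵀ * Q = 1) (x : Fin d → ℝ) : vecLpNorm 2 (Q *ᵥ x) = vecLpNorm 2 x := by
  rw [vecLpNorm_two_eq_sqrt_dotProduct, vecLpNorm_two_eq_sqrt_dotProduct, dotProduct_mulVec,
    ← mulVec_transpose, mulVec_mulVec, hQ, one_mulVec, dotProduct_comm]

lemma vecLpNorm_two_single_one {d : ℕ} (j : Fin d) : vecLpNorm 2 (Pi.single j (1 : ℝ)) = 1 := by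
  simp [vecLpNorm_two_eq_sqrt_dotProduct]

lemma matEntryLpNorm_le_of_forall_col_le {p C : ℝ} (hp : 0 < p) (hC : 0 ≤ C) {m d : ℕ}
    {U : Matrix (Fin m) (Fin d) ℝ} (h : ∀ j, vecLpNorm p (U.col j) ≤ C) :
    matEntryLpNorm p U ≤ (d : ℝ) ^ (1 / p) * C := by
  have hcol : ∀ j, ∑ i, |U i j| ^ p ≤ C ^ p := fun j => by
    have := Real.rpow_le_rpow (vecLpNorm_nonneg p _) (h j) hp.le
    rwa [vecLpNorm, ← Real.rpow_mul (by positivity), one_div_mul_cancel hp.ne', Real.rpow_one]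
      at this
  calc matEntryLpNorm p U = (∑ j, ∑ i, |U i j| ^ p) ^ (1 / p) := by
        rw [matEntryLpNorm, sum_comm]
    _ ≤ (∑ _j : Fin d, C ^ p) ^ (1 / p) := by gcongr with j; exact hcol j
    _ = (d : ℝ) ^ (1 / p) * C := by
      rw [sum_const, card_univ, Fintype.card_fin, nsmul_eq_mul,
        Real.mul_rpow (Nat.cast_nonneg d) (by positivity), ← Real.rpow_mul hC,
        mul_one_div_cancel hp.ne', Real.rpow_one]

section Sandwich

variable {m s d : ℕ} {p : ℝ} {U : Matrix (Fin m) (Fin d) ℝ} {Q : Matrix (Fin s) (Fin d) ℝ}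

lemma matEntryLpNorm_le_of_lower_bound (hp : 1 ≤ p) (hQ : Qᵀ * Q = 1) {σ : ℝ} (hσ : 0 < σ)
    (hlow : ∀ x, σ * vecLpNorm p (U *ᵥ x) ≤ vecLpNorm p (Q *ᵥ x)) :
    matEntryLpNorm p U ≤ (d : ℝ) ^ (1 / p) * ((s : ℝ) ^ max 0 (1 / p - 1 / 2) / σ) := by
  refine matEntryLpNorm_le_of_forall_col_le (by linarith) (by positivity) fun j => ?_
  rw [le_div_iff₀ hσ, mul_comm, ← mulVec_single_one]
  calc σ * vecLpNorm p (U *ᵥ Pi.single j 1) ≤ vecLpNorm p (Q *ᵥ Pi.single j 1) := hlow _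
    _ ≤ (s : ℝ) ^ max 0 (1 / p - 1 / 2) * vecLpNorm 2 (Q *ᵥ Pi.single j 1) :=
      vecLpNorm_le_card_rpow_mul _ (by linarith) two_pos
    _ = (s : ℝ) ^ max 0 (1 / p - 1 / 2) := by
      rw [vecLpNorm_two_mulVec_of_transpose_mul_self hQ, vecLpNorm_two_single_one, mul_one]

lemma vecDualNorm_le_of_upper_bound (hp : 1 ≤ p) (hQ : Qᵀ * Q = 1) {c : ℝ}
    (hup : ∀ x, vecLpNorm p (Q *ᵥ x) ≤ c * vecLpNorm p (U *ᵥ x)) (x : Fin d → ℝ) :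
    vecDualNorm p x ≤
      c * ((d : ℝ) ^ max 0 (1 / 2 - 1 / p) * (s : ℝ) ^ max 0 (1 / 2 - 1 / p)) *
        vecLpNorm p (U *ᵥ x) := by
  calc vecDualNorm p x ≤ (d : ℝ) ^ max 0 (1 / 2 - 1 / p) * vecLpNorm 2 x :=
        vecDualNorm_le_card_rpow_mul_vecLpNorm_two hp x
    _ = (d : ℝ) ^ max 0 (1 / 2 - 1 / p) * vecLpNorm 2 (Q *ᵥ x) := by
      rw [vecLpNorm_two_mulVec_of_transpose_mul_self hQ]
    _ ≤ (d : ℝ) ^ max 0 (1 / 2 - 1 / p) *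
        ((s : ℝ) ^ max 0 (1 / 2 - 1 / p) * vecLpNorm p (Q *ᵥ x)) := by
      gcongr; exact vecLpNorm_le_card_rpow_mul _ two_pos (by linarith)
    _ ≤ (d : ℝ) ^ max 0 (1 / 2 - 1 / p) *
        ((s : ℝ) ^ max 0 (1 / 2 - 1 / p) * (c * vecLpNorm p (U *ᵥ x))) := by
      gcongr; exact hup x
    _ = _ := by ring

end Sandwich

lemma add_max_zero_sub (a b : ℝ) : a + max 0 (b - a) = max b a := by
  rcases le_total a b with h | h
  · rw [max_eq_right (by linarith), max_eq_left h]; ring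
  · rw [max_eq_left (by linarith), max_eq_right h, add_zero]

lemma max_zero_sub_add_max_zero_sub (a b : ℝ) : max 0 (a - b) + max 0 (b - a) = |a - b| := by
  rcases le_total a b with h | h
  · rw [max_eq_left (by linarith), max_eq_right (by linarith), abs_of_nonpos (by linarith)]; ring
  · rw [max_eq_right (by linarith), max_eq_left (by linarith), abs_of_nonneg (by linarith)]; ring

theorem preconditioning_quality_general
    (n d s : ℕ) (p : ℝ) (hp : 1 ≤ p)
    (A : Matrix (Fin n) (Fin d) ℝ)
    (S : Matrix (Fin s) (Fin n) ℝ) (σS κS : ℝ) (hσ : 0 < σS) (hκ : 1 ≤ κS)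
    (hsketch : ∀ x : Fin d → ℝ,
      σS * vecLpNorm p (A *ᵥ x) ≤ vecLpNorm p ((S * A) *ᵥ x) ∧
      vecLpNorm p ((S * A) *ᵥ x) ≤ κS * σS * vecLpNorm p (A *ᵥ x))
    (Q : Matrix (Fin s) (Fin d) ℝ) (R : Matrix (Fin d) (Fin d) ℝ)
    (hQR : S * A = Q * R) (hQ : Qᵀ * Q = 1) (hR : IsUnit R) :
    ∃ α β : ℝ, IsConditioned p α β (A * R⁻¹) ∧
      α * β ≤ κS * (d : ℝ) ^ (max (1/2 : ℝ) (1/p)) * (s : ℝ) ^ |1/p - 1/2| := by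
  have hSU : S * (A * R⁻¹) = Q := by
    rw [← Matrix.mul_assoc, hQR, Matrix.mul_assoc,
      mul_nonsing_inv R ((isUnit_iff_isUnit_det R).mp hR), Matrix.mul_one]
  have hsandwich (x : Fin d → ℝ) := hsketch (R⁻¹ *ᵥ x)
  simp only [mulVec_mulVec, Matrix.mul_assoc, hSU] at hsandwich
  refine ⟨_, _, ⟨by positivity, matEntryLpNorm_le_of_lower_bound hp hQ hσ (hsandwich · |>.1),
    vecDualNorm_le_of_upper_bound hp hQ (hsandwich · |>.2)⟩, le_of_eq ?_⟩
  rw [← add_max_zero_sub (1 / p), ← max_zero_sub_add_max_zero_sub,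
    Real.rpow_add_of_nonneg d.cast_nonneg (by positivity) (le_max_left _ _),
    Real.rpow_add_of_nonneg s.cast_nonneg (le_max_left _ _) (le_max_left _ _)]
  field_simp

theorem preconditioning_quality
    (n d s : ℕ) (p : ℝ) (hp : 1 ≤ p)
    (A : Matrix (Fin n) (Fin d) ℝ) (hrank : A.rank = d)
    (S : Matrix (Fin s) (Fin n) ℝ) (σS κS : ℝ) (hσ : 0 < σS) (hκ : 1 ≤ κS)
    (hsketch : ∀ x : Fin d → ℝ,
      σS * vecLpNorm p (A *ᵥ x) ≤ vecLpNorm p ((S * A) *ᵥ x) ∧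
      vecLpNorm p ((S * A) *ᵥ x) ≤ κS * σS * vecLpNorm p (A *ᵥ x))
    (Q : Matrix (Fin s) (Fin d) ℝ) (R : Matrix (Fin d) (Fin d) ℝ)
    (hQR : S * A = Q * R) (hQ : Qᵀ * Q = 1) (hR : IsUnit R) :
    ∃ α β : ℝ, IsConditioned p α β (A * R⁻¹) ∧
      α * β ≤ κS * (d : ℝ) ^ (max (1/2 : ℝ) (1/p)) * (s : ℝ) ^ |1/p - 1/2| :=
  preconditioning_quality_general n d s p hp A S σS κS hσ hκ hsketch Q R hQR hQ hR
end

section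
/- Let A ∈ ℝ^{n×d} have full column rank, b ∈ ℝ^n, and f(x) = ‖Ax − b‖₁. Let R ∈ ℝ^{d×d} be invertible with U = AR⁻¹ an (α,β,1)-conditioned matrix, let 0 ≤ γ < 1 and λ_1,…,λ_n satisfy (1−γ)‖U_i‖₁ ≤ λ_i ≤ (1+γ)‖U_i‖₁ with Σ_j λ_j > 0, and set p_i = λ_i/Σ_j λ_j. Let F ∈ ℝ^{d×d} be invertible, H = (FFᵀ)⁻¹, let Z ⊆ ℝ^d be nonempty, closed and convex, x₀ ∈ Z, η > 0, and let ξ₀,…,ξ_{T} be i.i.d. indices drawn from (p_i). Define the recursion x_{t+1} = argmin_{x∈Z}[ η c_t A_{ξ_t} x + ½‖x_t − x‖_H² ] with c_t = sgn(A_{ξ_t}x_t − b_{ξ_t})/p_{ξ_t}, and let x̄ = (1/(T+1)) Σ_{t=0}^{T} x_t. Then for any minimizer x* of f over Z, E[f(x̄)] − f(x*) ≤ ‖x* − x₀‖_H²/(2η(T+1)) + (η/2)·(c₁ α |RF|₁)², where c₁ = (1+γ)/(1−γ), the expectation is over the random indices, |M|₁ = Σ_{i,j}|M_{ij}|, and ‖v‖_H²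 = vᵀHv. -/
/-!
Each iterate is a proximal step `x_{t+1} = argmin_Z (c_t ⟪a_t, x⟫ + ½‖x_t - x‖²_H)`. Its first-order
optimality condition, the three-point identity and Young's inequality for the dual norm
`‖a‖²_{H⁻¹} = ‖aᵀF‖₂²` give, for every `z ∈ Z`,
`c_t ⟪a_t, x_t - z⟫ ≤ ½‖z - x_t‖²_H - ½‖z - x_{t+1}‖²_H + ½ c_t² ‖a_t‖²_{H⁻¹}`.
Because the proximal minimiser is unique, `x_t` depends only on `ξ₀, …, ξ_{t-1}`, so averaging over
`ξ_t` turns the left side into `η` times a subgradient inequality for `f`, while the second moment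
is at most `η² (c₁ α |RF|₁)²` since `‖U_i‖₁ ≤ c₁ α p_i`. Summing over `t` telescopes, and convexity
of `f` passes from the average of the `f(x_t)` to `f(x̄)`.
-/

open Matrix Finset

/-- The `ℓ₁` norm of a vector. -/
noncomputable def l1Norm {m : ℕ} (v : Fin m → ℝ) : ℝ := ∑ i, |v i|

/-- The `ℓ_∞` norm of a vector. -/
noncomputable def linfNorm {m : ℕ} (v : Fin m → ℝ) : ℝ := ⨆ i, |v i|

/-- The entrywise `ℓ₁` norm of a matrix: `|M|₁ = ∑ i j, |M i j|`. -/
noncomputable def entry1Norm {m k : ℕ} (M : Matrix (Fin m) (Fin k) ℝ) : ℝ :=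
  ∑ i, ∑ j, |M i j|

/-- `U` is `(α, β, 1)`-conditioned: `|U|₁ ≤ α` and `‖x‖_∞ ≤ β ‖U x‖₁` for all `x`
(the constant `β` being nonnegative). -/
def IsConditioned1 {m k : ℕ} (α β : ℝ) (U : Matrix (Fin m) (Fin k) ℝ) : Prop :=
  0 ≤ β ∧ entry1Norm U ≤ α ∧ ∀ x : Fin k → ℝ, linfNorm x ≤ β * l1Norm (U *ᵥ x)

/-- The squared ellipsoidal norm `‖v‖_H² = vᵀ H v`. -/
noncomputable def normHsq {k : ℕ} (H : Matrix (Fin k) (Fin k) ℝ) (v : Fin k → ℝ) : ℝ :=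
  v ⬝ᵥ (H *ᵥ v)

section QuadraticForm

variable {k : ℕ} {H : Matrix (Fin k) (Fin k) ℝ}

lemma Matrix.IsHermitian.dotProduct_mulVec_comm (hH : H.IsHermitian) (u w : Fin k → ℝ) :
    u ⬝ᵥ (H *ᵥ w) = w ⬝ᵥ (H *ᵥ u) := by
  rw [← dotProduct_transpose_mulVec, (isHermitian_iff_isSymm.mp hH).eq]

lemma normHsq_smul (m : ℝ) (v : Fin k → ℝ) : normHsq H (m • v) = m ^ 2 * normHsq H v := by
  simp only [normHsq, mulVec_smul, dotProduct_smul, smul_dotProduct, smul_eq_mul]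
  ring

lemma normHsq_sub (hH : H.IsHermitian) (u w : Fin k → ℝ) :
    normHsq H (u - w) = normHsq H u - 2 * (w ⬝ᵥ (H *ᵥ u)) + normHsq H w := by
  simp only [normHsq, mulVec_sub, dotProduct_sub, sub_dotProduct, hH.dotProduct_mulVec_comm u w]
  ring

lemma Matrix.PosSemidef.normHsq_nonneg (hH : H.PosSemidef) (v : Fin k → ℝ) :
    0 ≤ normHsq H v := by
  simpa [normHsq] using hH.dotProduct_mulVec_nonneg v

lemma Matrix.PosDef.eq_zero_of_normHsq_nonpos (hH : H.PosDef) {v : Fin k → ℝ}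
    (hv : normHsq H v ≤ 0) : v = 0 := by
  by_contra hne
  simpa [normHsq] using hv.trans_lt (hH.dotProduct_mulVec_pos hne)

/-- Young's inequality for the pair of dual norms `‖·‖_H`, `‖·‖_{H⁻¹}`. -/
lemma Matrix.PosDef.mul_dotProduct_le (hH : H.PosDef) (c : ℝ) (a v : Fin k → ℝ) :
    c * (a ⬝ᵥ v) ≤ 1 / 2 * normHsq H v + c ^ 2 / 2 * normHsq H⁻¹ a := by
  have hHw : H *ᵥ (H⁻¹ *ᵥ a) = a := by
    rw [mulVec_mulVec, mul_nonsing_inv _ ((isUnit_iff_isUnit_det H).mp hH.isUnit), one_mulVec]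
  have h := hH.posSemidef.normHsq_nonneg (v - c • (H⁻¹ *ᵥ a))
  have hw : normHsq H (H⁻¹ *ᵥ a) = normHsq H⁻¹ a := by
    rw [normHsq, hHw, normHsq, dotProduct_comm]
  rw [normHsq_sub hH.isHermitian, normHsq_smul, hw, smul_dotProduct,
    hH.isHermitian.dotProduct_mulVec_comm, hHw, smul_eq_mul, dotProduct_comm v a] at h
  linarith

lemma normHsq_mul_transpose (F : Matrix (Fin k) (Fin k) ℝ) (a : Fin k → ℝ) :
    normHsq (F * Fᵀ) a = (a ᵥ* F) ⬝ᵥ (a ᵥ* F) := by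
  rw [normHsq, ← mulVec_mulVec, dotProduct_mulVec, mulVec_transpose]

end QuadraticForm

lemma posDef_mul_transpose_of_isUnit {ι : Type*} [Fintype ι] [DecidableEq ι]
    {F : Matrix ι ι ℝ} (hF : IsUnit F) : (F * Fᵀ).PosDef := by
  simpa only [conjTranspose_eq_transpose_of_trivial] using
    PosDef.mul_conjTranspose_self F (vecMul_injective_iff_isUnit.mpr hF)

lemma nonneg_of_forall_mul_add_sq_mul_nonneg {L M : ℝ}
    (h : ∀ m : ℝ, 0 < m → m ≤ 1 → 0 ≤ m * L + m ^ 2 * M) : 0 ≤ L := by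
  by_contra! hL
  set m := min 1 (-L / (|M| + 1))
  have hM : 0 < |M| + 1 := by positivity
  have hm0 : 0 < m := lt_min one_pos (div_pos (neg_pos.2 hL) hM)
  have hmL : m * (|M| + 1) ≤ -L := (le_div_iff₀ hM).mp (min_le_right _ _)
  nlinarith [h m hm0 (min_le_left _ _), le_abs_self M, mul_pos hm0 hm0]

section ProximalStep

variable {k : ℕ} {H : Matrix (Fin k) (Fin k) ℝ} {Z : Set (Fin k → ℝ)} {c : ℝ} {a y x z : Fin k → ℝ}

noncomputable def proxObjective (H : Matrix (Fin k) (Fin k) ℝ) (c : ℝ) (a y x : Fin k → ℝ) : ℝ :=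
  c * (a ⬝ᵥ x) + 1 / 2 * normHsq H (y - x)

lemma IsMinOn.proxObjective_variational_ineq (hH : H.IsHermitian) (hZ : Convex ℝ Z)
    (hmin : IsMinOn (proxObjective H c a y) Z x) (hx : x ∈ Z) (hz : z ∈ Z) :
    (z - x) ⬝ᵥ (H *ᵥ (y - x)) ≤ c * (a ⬝ᵥ (z - x)) := by
  rw [← sub_nonneg]
  refine nonneg_of_forall_mul_add_sq_mul_nonneg (M := 1 / 2 * normHsq H (z - x)) fun m hm0 hm1 => ?_
  have hmem : x + m • (z - x) ∈ Z := hZ.add_smul_sub_mem hx hz ⟨hm0.le, hm1⟩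
  have hle := isMinOn_iff.mp hmin _ hmem
  rw [proxObjective, proxObjective, sub_add_eq_sub_sub, normHsq_sub hH (y - x), normHsq_smul,
    dotProduct_add, smul_dotProduct, dotProduct_smul, smul_eq_mul, smul_eq_mul] at hle
  linarith

lemma IsMinOn.proxObjective_unique (hH : H.PosDef) (hZ : Convex ℝ Z) {x' : Fin k → ℝ}
    (hmin : IsMinOn (proxObjective H c a y) Z x) (hmin' : IsMinOn (proxObjective H c a y) Z x')
    (hx : x ∈ Z) (hx' : x' ∈ Z) : x = x' := by
  have h := hmin.proxObjective_variational_ineq hH.isHermitian hZ hx hx'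
  have h' := hmin'.proxObjective_variational_ineq hH.isHermitian hZ hx' hx
  have hsq : normHsq H (x' - x)
      = (x' - x) ⬝ᵥ (H *ᵥ (y - x)) + (x - x') ⬝ᵥ (H *ᵥ (y - x')) := by
    simp only [normHsq, mulVec_sub, dotProduct_sub, sub_dotProduct]
    ring
  have hlin : c * (a ⬝ᵥ (x' - x)) + c * (a ⬝ᵥ (x - x')) = 0 := by
    simp only [dotProduct_sub]
    ring
  exact (sub_eq_zero.mp (hH.eq_zero_of_normHsq_nonpos (by linarith))).symm

lemma IsMinOn.proxObjective_descent (hH : H.PosDef) (hZ : Convex ℝ Z)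
    (hmin : IsMinOn (proxObjective H c a y) Z x) (hx : x ∈ Z) (hz : z ∈ Z) :
    c * (a ⬝ᵥ (y - z))
      ≤ 1 / 2 * normHsq H (z - y) - 1 / 2 * normHsq H (z - x) + c ^ 2 / 2 * normHsq H⁻¹ a := by
  have hvi := hmin.proxObjective_variational_ineq hH.isHermitian hZ hx hz
  have hyoung := hH.mul_dotProduct_le c a (y - x)
  have hthree : normHsq H (z - y)
      = normHsq H (z - x) - 2 * ((z - x) ⬝ᵥ (H *ᵥ (y - x))) + normHsq H (y - x) := by
    rw [hH.isHermitian.dotProduct_mulVec_comm (z - x), ← normHsq_sub hH.isHermitian,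
      sub_sub_sub_cancel_right]
  have hsplit : a ⬝ᵥ (y - z) = a ⬝ᵥ (y - x) - a ⬝ᵥ (z - x) := by
    simp only [dotProduct_sub]
    ring
  rw [hsplit, hthree, mul_sub]
  linarith

end ProximalStep

lemma prod_update_mul {ι κ : Type*} [Fintype ι] [DecidableEq ι] (p : κ → ℝ) (ξ : ι → κ) (t : ι)
    (j : κ) : (∏ s, p (Function.update ξ t j s)) * p (ξ t) = p j * ∏ s, p (ξ s) := by
  have hupd :
      (fun s => p (Function.update ξ t j s)) = Function.update (fun s => p (ξ s)) t (p j) :=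
    funext fun s => Function.apply_update (fun _ => p) ξ t j s
  rw [hupd, prod_update_of_mem (mem_univ t), prod_eq_mul_prod_sdiff_singleton_of_mem (mem_univ t)]
  ring

section IidExpectation

variable {ι κ : Type*} [Fintype ι] [DecidableEq ι] [Fintype κ] {p : κ → ℝ}

noncomputable def iidExpect (p : κ → ℝ) (g : (ι → κ) → ℝ) : ℝ := ∑ ξ, (∏ s, p (ξ s)) * g ξ

lemma iidExpect_const (hp1 : ∑ i, p i = 1) (c : ℝ) : iidExpect p (fun _ : ι → κ => c) = c := by
  rw [iidExpect, ← sum_mul, ← Fintype.prod_sum, hp1, prod_const_one, one_mul]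

lemma iidExpect_mono (hp : ∀ i, 0 ≤ p i) {g g' : (ι → κ) → ℝ} (h : ∀ ξ, g ξ ≤ g' ξ) :
    iidExpect p g ≤ iidExpect p g' :=
  sum_le_sum fun ξ _ => mul_le_mul_of_nonneg_left (h ξ) (prod_nonneg fun _ _ => hp _)

lemma iidExpect_nonneg (hp : ∀ i, 0 ≤ p i) {g : (ι → κ) → ℝ} (h : ∀ ξ, 0 ≤ g ξ) :
    0 ≤ iidExpect p g :=
  sum_nonneg fun ξ _ => mul_nonneg (prod_nonneg fun _ _ => hp _) (h ξ)

lemma iidExpect_add (g g' : (ι → κ) → ℝ) :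
    iidExpect p (fun ξ => g ξ + g' ξ) = iidExpect p g + iidExpect p g' := by
  simp only [iidExpect, mul_add, sum_add_distrib]

lemma iidExpect_sub (g g' : (ι → κ) → ℝ) :
    iidExpect p (fun ξ => g ξ - g' ξ) = iidExpect p g - iidExpect p g' := by
  simp only [iidExpect, mul_sub, sum_sub_distrib]

lemma iidExpect_const_mul (c : ℝ) (g : (ι → κ) → ℝ) :
    iidExpect p (fun ξ => c * g ξ) = c * iidExpect p g := by
  simp only [iidExpect, mul_sum, mul_left_comm]

lemma iidExpect_sum {β : Type*} (s : Finset β) (g : β → (ι → κ) → ℝ) :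
    iidExpect p (fun ξ => ∑ t ∈ s, g t ξ) = ∑ t ∈ s, iidExpect p (g t) := by
  simp only [iidExpect, mul_sum]
  exact sum_comm

lemma iidExpect_integrate_coord (hp1 : ∑ i, p i = 1) (t : ι)
    (Φ : κ → (ι → κ) → ℝ) (hΦ : ∀ i ξ j, Φ i (Function.update ξ t j) = Φ i ξ) :
    iidExpect p (fun ξ => Φ (ξ t) ξ) = iidExpect p (fun ξ => ∑ i, p i * Φ i ξ) := by
  -- Both sides are sums over pairs `(ξ, j)`; the involution `(ξ, j) ↦ (ξ[t ↦ j], ξ t)` matches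
  -- their terms.
  let σ : (ι → κ) × κ → (ι → κ) × κ := fun ξj => (Function.update ξj.1 t ξj.2, ξj.1 t)
  have hσ : Function.Involutive σ := fun ξj => by
    simp [σ, Function.update_idem, Function.update_eq_self]
  calc iidExpect p (fun ξ => Φ (ξ t) ξ)
      = ∑ ξj : (ι → κ) × κ, p ξj.2 * ((∏ s, p (ξj.1 s)) * Φ (ξj.1 t) ξj.1) := by
        simp only [iidExpect, Fintype.sum_prod_type, ← sum_mul, hp1, one_mul]
    _ = ∑ ξj : (ι → κ) × κ, (∏ s, p (ξj.1 s)) * (p ξj.2 * Φ ξj.2 ξj.1) := by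
        refine Fintype.sum_bijective σ hσ.bijective _ _ fun ξj => ?_
        simp only [σ, hΦ]
        linear_combination -Φ (ξj.1 t) ξj.1 * prod_update_mul p ξj.1 t ξj.2
    _ = iidExpect p (fun ξ => ∑ i, p i * Φ i ξ) := by
        simp only [iidExpect, Fintype.sum_prod_type, mul_sum]

end IidExpectation

lemma ConvexOn.map_inv_card_smul_sum_le {E ι : Type*} [AddCommGroup E] [Module ℝ E] {f : E → ℝ}
    (hf : ConvexOn ℝ Set.univ f) {s : Finset ι} (hs : s.Nonempty) (x : ι → E) :
    f ((#s : ℝ)⁻¹ • ∑ i ∈ s, x i) ≤ (#s : ℝ)⁻¹ * ∑ i ∈ s, f (x i) := by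
  have hw : ∑ _i ∈ s, (#s : ℝ)⁻¹ = 1 := by
    rw [sum_const, nsmul_eq_mul, mul_inv_cancel₀ (by exact_mod_cast hs.card_pos.ne')]
  simpa only [smul_sum, mul_sum, smul_eq_mul] using
    hf.map_sum_le (fun _ _ => by positivity) hw fun i _ => Set.mem_univ (x i)

lemma ConvexOn.iidExpect_map_average_le {ι κ E : Type*} [Fintype ι] [DecidableEq ι] [Fintype κ]
    [AddCommGroup E] [Module ℝ E] {f : E → ℝ} (hf : ConvexOn ℝ Set.univ f) {p : κ → ℝ}
    (hp : ∀ i, 0 ≤ p i) (x : (ι → κ) → ℕ → E) (N : ℕ) :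
    iidExpect p (fun ξ => f (((N : ℝ) + 1)⁻¹ • ∑ t ∈ range (N + 1), x ξ t))
      ≤ ((N : ℝ) + 1)⁻¹ * ∑ t ∈ range (N + 1), iidExpect p (fun ξ => f (x ξ t)) := by
  rw [← iidExpect_sum, ← iidExpect_const_mul]
  refine iidExpect_mono hp fun ξ => ?_
  simpa only [card_range, Nat.cast_add_one] using
    hf.map_inv_card_smul_sum_le nonempty_range_add_one (x ξ)

lemma apply_eq_of_forall_lt_eq_of_unique_step {α β : Type*} {N : ℕ} (x : (Fin N → α) → ℕ → β)
    (P : α → β → β → Prop) (hP : ∀ i y u v, P i y u → P i y v → u = v)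
    (h0 : ∀ ξ ξ', x ξ 0 = x ξ' 0) (hstep : ∀ ξ (t : Fin N), P (ξ t) (x ξ t) (x ξ (t + 1)))
    {ξ ξ' : Fin N → α} {k : ℕ} (hk : k ≤ N) (h : ∀ s : Fin N, (s : ℕ) < k → ξ s = ξ' s) :
    x ξ k = x ξ' k := by
  induction k with
  | zero => exact h0 ξ ξ'
  | succ k ih =>
    have hkN : k < N := hk
    have hprev := ih hkN.le fun s hs => h s (hs.trans k.lt_succ_self)
    have hξ : ξ ⟨k, hkN⟩ = ξ' ⟨k, hkN⟩ := h ⟨k, hkN⟩ k.lt_succ_self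
    have hnext := hstep ξ' ⟨k, hkN⟩
    rw [← hξ, ← hprev] at hnext
    exact hP _ _ _ _ (hstep ξ ⟨k, hkN⟩) hnext

lemma average_sub_le_of_telescoping {N : ℕ} {η C v : ℝ} {a D : ℕ → ℝ} (hη : 0 < η)
    (hD : 0 ≤ D (N + 1))
    (h : ∀ t < N + 1, η * (a t - v) ≤ D t / 2 - D (t + 1) / 2 + η ^ 2 / 2 * C) :
    ((N : ℝ) + 1)⁻¹ * ∑ t ∈ range (N + 1), a t - v ≤ D 0 / (2 * η * ((N : ℝ) + 1)) + η / 2 * C := by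
  have htel := sum_range_sub' (fun t => D t / 2) (N + 1)
  have hsum := sum_le_sum fun t ht => h t (mem_range.mp ht)
  rw [sum_add_distrib, htel, ← mul_sum, sum_sub_distrib, sum_const, sum_const, card_range,
    nsmul_eq_mul, nsmul_eq_mul, Nat.cast_add_one] at hsum
  calc ((N : ℝ) + 1)⁻¹ * ∑ t ∈ range (N + 1), a t - v
      = η * (∑ t ∈ range (N + 1), a t - (N + 1) * v) / (η * (N + 1)) := by field_simp
    _ ≤ (D 0 / 2 + (N + 1) * (η ^ 2 / 2 * C)) / (η * (N + 1)) := by gcongr; linarith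
    _ = D 0 / (2 * η * ((N : ℝ) + 1)) + η / 2 * C := by field_simp

section StochasticProximalDescent

variable {n d N : ℕ} {H : Matrix (Fin d) (Fin d) ℝ} {Z : Set (Fin d → ℝ)} {p : Fin n → ℝ}
  {η K : ℝ} {a : Fin n → Fin d → ℝ} {g : Fin n → (Fin d → ℝ) → ℝ}
  {x : (Fin N → Fin n) → ℕ → Fin d → ℝ}

lemma apply_update_self_eq_of_isMinOn (hH : H.PosDef) (hZ : Convex ℝ Z)
    (hx0 : ∀ ξ ξ', x ξ 0 = x ξ' 0) (hxZ : ∀ ξ t, x ξ t ∈ Z)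
    (hx : ∀ ξ (t : Fin N),
      IsMinOn (proxObjective H (η * g (ξ t) (x ξ t)) (a (ξ t)) (x ξ t)) Z (x ξ (t + 1)))
    (t : Fin N) (ξ : Fin N → Fin n) (j : Fin n) : x (Function.update ξ t j) t = x ξ t :=
  apply_eq_of_forall_lt_eq_of_unique_step x
    (fun i y u => u ∈ Z ∧ IsMinOn (proxObjective H (η * g i y) (a i) y) Z u)
    (fun _ _ _ _ hu hv => hu.2.proxObjective_unique hH hZ hv.2 hu.1 hv.1) hx0
    (fun ξ s => ⟨hxZ _ _, hx ξ s⟩) t.isLt.le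
    fun _ hs => Function.update_of_ne (Fin.ne_of_lt hs) _ _

/-- `hsub`: averaged over `i ∼ p`, `g i y • a i` is a subgradient of `f` at `y` (tested against
`z`); `hvar`: its second moment in the dual norm is at most `K`. -/
theorem expected_proxObjective_descent (hH : H.PosDef) (hZ : Convex ℝ Z) (hp : ∀ i, 0 ≤ p i)
    (hp1 : ∑ i, p i = 1) (hη : 0 ≤ η) (f : (Fin d → ℝ) → ℝ) {z : Fin d → ℝ} (hz : z ∈ Z)
    (hsub : ∀ y, f y - f z ≤ ∑ i, p i * (g i y * (a i ⬝ᵥ (y - z))))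
    (hvar : ∀ y, ∑ i, p i * (g i y ^ 2 * normHsq H⁻¹ (a i)) ≤ K)
    (hx0 : ∀ ξ ξ', x ξ 0 = x ξ' 0) (hxZ : ∀ ξ t, x ξ t ∈ Z)
    (hx : ∀ ξ (t : Fin N),
      IsMinOn (proxObjective H (η * g (ξ t) (x ξ t)) (a (ξ t)) (x ξ t)) Z (x ξ (t + 1)))
    (t : Fin N) :
    η * (iidExpect p (fun ξ => f (x ξ t)) - f z)
      ≤ iidExpect p (fun ξ => normHsq H (z - x ξ t)) / 2
        - iidExpect p (fun ξ => normHsq H (z - x ξ (t + 1))) / 2 + η ^ 2 / 2 * K := by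
  have hadapt := apply_update_self_eq_of_isMinOn hH hZ hx0 hxZ hx t
  have hdescent : ∀ ξ, η * g (ξ t) (x ξ t) * (a (ξ t) ⬝ᵥ (x ξ t - z))
      ≤ normHsq H (z - x ξ t) / 2 - normHsq H (z - x ξ (t + 1)) / 2
        + η ^ 2 / 2 * (g (ξ t) (x ξ t) ^ 2 * normHsq H⁻¹ (a (ξ t))) := fun ξ => by
    have := (hx ξ t).proxObjective_descent hH hZ (hxZ _ _) hz
    linarith
  calc η * (iidExpect p (fun ξ => f (x ξ t)) - f z)
      = iidExpect p (fun ξ => η * (f (x ξ t) - f z)) := by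
        rw [iidExpect_const_mul, iidExpect_sub, iidExpect_const hp1]
    _ ≤ iidExpect p (fun ξ => ∑ i, p i * (η * g i (x ξ t) * (a i ⬝ᵥ (x ξ t - z)))) :=
        iidExpect_mono hp fun ξ => by
          simpa only [mul_sum, mul_left_comm η, mul_assoc] using
            mul_le_mul_of_nonneg_left (hsub (x ξ t)) hη
    _ = iidExpect p (fun ξ => η * g (ξ t) (x ξ t) * (a (ξ t) ⬝ᵥ (x ξ t - z))) :=
        (iidExpect_integrate_coord hp1 t (fun i ξ => η * g i (x ξ t) * (a i ⬝ᵥ (x ξ t - z)))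
          fun _ _ _ => by simp only [hadapt]).symm
    _ ≤ iidExpect p (fun ξ => normHsq H (z - x ξ t) / 2 - normHsq H (z - x ξ (t + 1)) / 2
          + η ^ 2 / 2 * (g (ξ t) (x ξ t) ^ 2 * normHsq H⁻¹ (a (ξ t)))) :=
        iidExpect_mono hp hdescent
    _ = iidExpect p (fun ξ => normHsq H (z - x ξ t)) / 2
          - iidExpect p (fun ξ => normHsq H (z - x ξ (t + 1))) / 2
          + η ^ 2 / 2
            * iidExpect p (fun ξ => ∑ i, p i * (g i (x ξ t) ^ 2 * normHsq H⁻¹ (a i))) := by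
        rw [← iidExpect_integrate_coord hp1 t (fun i ξ => g i (x ξ t) ^ 2 * normHsq H⁻¹ (a i))
          fun _ _ _ => by simp only [hadapt]]
        simp only [div_eq_mul_inv, iidExpect_add, iidExpect_sub, mul_comm _ (2 : ℝ)⁻¹,
          iidExpect_const_mul]
    _ ≤ _ := by
        gcongr
        exact (iidExpect_mono hp fun ξ => hvar (x ξ t)).trans_eq (iidExpect_const hp1 K)

end StochasticProximalDescent

section L1Norm

variable {m k : ℕ}

lemma l1Norm_nonneg (v : Fin m → ℝ) : 0 ≤ l1Norm v :=
  sum_nonneg fun i _ => abs_nonneg (v i)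

lemma entry1Norm_nonneg (M : Matrix (Fin m) (Fin k) ℝ) : 0 ≤ entry1Norm M :=
  sum_nonneg fun i _ => l1Norm_nonneg (M i)

lemma entry1Norm_eq_sum_l1Norm (M : Matrix (Fin m) (Fin k) ℝ) :
    entry1Norm M = ∑ i, l1Norm (M i) := rfl

lemma l1Norm_eq_zero_iff {v : Fin m → ℝ} : l1Norm v = 0 ↔ v = 0 := by
  simp [l1Norm, sum_eq_zero_iff_of_nonneg, funext_iff]

lemma dotProduct_self_le_l1Norm_sq (v : Fin m → ℝ) : v ⬝ᵥ v ≤ l1Norm v ^ 2 := by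
  rw [sq, l1Norm, sum_mul]
  refine sum_le_sum fun i _ => ?_
  rw [← abs_mul_abs_self]
  exact mul_le_mul_of_nonneg_left (single_le_sum (fun j _ => abs_nonneg (v j)) (mem_univ i))
    (abs_nonneg _)

lemma l1Norm_vecMul_le (v : Fin m → ℝ) (M : Matrix (Fin m) (Fin k) ℝ) :
    l1Norm (v ᵥ* M) ≤ l1Norm v * entry1Norm M := by
  calc l1Norm (v ᵥ* M) = ∑ j, |∑ i, v i * M i j| := rfl
    _ ≤ ∑ j, ∑ i, |v i| * |M i j| :=
        sum_le_sum fun j _ => (abs_sum_le_sum_abs _ _).trans_eq (by simp only [abs_mul])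
    _ = ∑ i, |v i| * l1Norm (M i) := by rw [sum_comm]; simp only [l1Norm, mul_sum]
    _ ≤ ∑ i, |v i| * entry1Norm M :=
        sum_le_sum fun i _ => mul_le_mul_of_nonneg_left
          (single_le_sum (fun j _ => l1Norm_nonneg (M j)) (mem_univ i)) (abs_nonneg _)
    _ = l1Norm v * entry1Norm M := by rw [l1Norm, sum_mul]

lemma convexOn_l1Norm_mulVec_sub (A : Matrix (Fin m) (Fin k) ℝ) (b : Fin m → ℝ) :
    ConvexOn ℝ Set.univ (fun x => l1Norm (A *ᵥ x - b)) := by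
  refine ⟨convex_univ, fun x _ y _ s t hs ht hst => ?_⟩
  simp only [smul_eq_mul, l1Norm, mul_sum, ← sum_add_distrib]
  refine sum_le_sum fun i _ => ?_
  have hi : (A *ᵥ (s • x + t • y) - b) i = s * (A *ᵥ x - b) i + t * (A *ᵥ y - b) i := by
    simp only [mulVec_add, mulVec_smul, Pi.add_apply, Pi.sub_apply, Pi.smul_apply, smul_eq_mul]
    linear_combination b i * hst
  rw [hi]
  refine (abs_add_le _ _).trans_eq ?_
  rw [abs_mul, abs_mul, abs_of_nonneg hs, abs_of_nonneg ht]

end L1Norm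

section SignSubgradient

variable {sgn : ℝ → ℝ}

lemma abs_sgn_le_one (hsgn : ∀ t : ℝ, t ≠ 0 → sgn t = t / |t|)
    (hsgn0 : sgn 0 ∈ Set.Icc (-1 : ℝ) 1) (u : ℝ) : |sgn u| ≤ 1 := by
  rcases eq_or_ne u 0 with rfl | hu
  · exact abs_le.mpr hsgn0
  · rw [hsgn u hu, abs_div, abs_abs, div_self (abs_ne_zero.mpr hu)]

lemma sgn_mul_self (hsgn : ∀ t : ℝ, t ≠ 0 → sgn t = t / |t|) (u : ℝ) : sgn u * u = |u| := by
  rcases eq_or_ne u 0 with rfl | hu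
  · simp
  · rw [hsgn u hu, div_mul_eq_mul_div, ← abs_mul_abs_self, mul_div_assoc,
      div_self (abs_ne_zero.mpr hu), mul_one]

lemma abs_sub_abs_le_sgn_mul_sub (hsgn : ∀ t : ℝ, t ≠ 0 → sgn t = t / |t|)
    (hsgn0 : sgn 0 ∈ Set.Icc (-1 : ℝ) 1) (u v : ℝ) : |u| - |v| ≤ sgn u * (u - v) := by
  have hv : sgn u * v ≤ |v| := (le_abs_self _).trans <| by
    rw [abs_mul]
    exact mul_le_of_le_one_left (abs_nonneg v) (abs_sgn_le_one hsgn hsgn0 u)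
  rw [mul_sub, sgn_mul_self hsgn]
  linarith

lemma l1Norm_mulVec_sub_sub_le_sum {n d : ℕ} (A : Matrix (Fin n) (Fin d) ℝ) (b : Fin n → ℝ)
    (hsgn : ∀ t : ℝ, t ≠ 0 → sgn t = t / |t|) (hsgn0 : sgn 0 ∈ Set.Icc (-1 : ℝ) 1)
    {p : Fin n → ℝ} (hA : ∀ i, p i = 0 → A i = 0) (y z : Fin d → ℝ) :
    l1Norm (A *ᵥ y - b) - l1Norm (A *ᵥ z - b)
      ≤ ∑ i, p i * (sgn (A i ⬝ᵥ y - b i) / p i * (A i ⬝ᵥ (y - z))) := by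
  rw [l1Norm, l1Norm, ← sum_sub_distrib]
  refine sum_le_sum fun i _ => ?_
  rw [div_mul_eq_mul_div,
    mul_div_cancel_of_imp' fun hp => by simp [hA i hp]]
  have hdiff : A i ⬝ᵥ (y - z) = (A i ⬝ᵥ y - b i) - (A i ⬝ᵥ z - b i) := by
    rw [dotProduct_sub]
    ring
  rw [hdiff]
  exact abs_sub_abs_le_sgn_mul_sub hsgn hsgn0 _ _

end SignSubgradient

section ImportanceSampling

variable {n d : ℕ} {U : Matrix (Fin n) (Fin d) ℝ} {α γ : ℝ} {lam prob : Fin n → ℝ}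

lemma prob_nonneg (hγ1 : γ < 1)
    (hlam : ∀ i, (1 - γ) * l1Norm (U i) ≤ lam i ∧ lam i ≤ (1 + γ) * l1Norm (U i))
    (hlamsum : 0 < ∑ j, lam j) (hprob : ∀ i, prob i = lam i / ∑ j, lam j) (i : Fin n) :
    0 ≤ prob i := by
  rw [hprob]
  exact div_nonneg ((mul_nonneg (by linarith) (l1Norm_nonneg _)).trans (hlam i).1) hlamsum.le

lemma sum_prob_eq_one (hlamsum : 0 < ∑ j, lam j) (hprob : ∀ i, prob i = lam i / ∑ j, lam j) :
    ∑ i, prob i = 1 := by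
  simp_rw [hprob, ← sum_div, div_self hlamsum.ne']

lemma l1Norm_row_le_mul_prob (hU : entry1Norm U ≤ α)
    (hγ0 : 0 ≤ γ) (hγ1 : γ < 1)
    (hlam : ∀ i, (1 - γ) * l1Norm (U i) ≤ lam i ∧ lam i ≤ (1 + γ) * l1Norm (U i))
    (hlamsum : 0 < ∑ j, lam j) (hprob : ∀ i, prob i = lam i / ∑ j, lam j) (i : Fin n) :
    l1Norm (U i) ≤ (1 + γ) / (1 - γ) * α * prob i := by
  have hsum : ∑ j, lam j ≤ (1 + γ) * α :=
    calc ∑ j, lam j ≤ ∑ j, (1 + γ) * l1Norm (U j) := sum_le_sum fun j _ => (hlam j).2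
      _ = (1 + γ) * entry1Norm U := by rw [← mul_sum, entry1Norm_eq_sum_l1Norm]
      _ ≤ (1 + γ) * α := by gcongr
  have h1γ : 0 < 1 - γ := by linarith
  have hlami : 0 ≤ lam i := (mul_nonneg h1γ.le (l1Norm_nonneg _)).trans (hlam i).1
  rw [hprob, show (1 + γ) / (1 - γ) * α * (lam i / ∑ j, lam j)
      = (1 + γ) * α * lam i / ((1 - γ) * ∑ j, lam j) by field_simp, le_div_iff₀ (by positivity)]
  calc l1Norm (U i) * ((1 - γ) * ∑ j, lam j) = (1 - γ) * l1Norm (U i) * ∑ j, lam j := by ring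
    _ ≤ lam i * ((1 + γ) * α) := mul_le_mul (hlam i).1 hsum hlamsum.le hlami
    _ = (1 + γ) * α * lam i := by ring

lemma mul_div_sq_mul_le {p s q r : ℝ} (hp : 0 ≤ p) (hs : |s| ≤ 1) (hq0 : 0 ≤ q)
    (hq : q ≤ p * r) (hr : 0 ≤ r) : p * ((s / p) ^ 2 * q) ≤ r := by
  rcases hp.eq_or_lt with rfl | hp
  · simpa using hr
  rw [div_pow, show p * (s ^ 2 / p ^ 2 * q) = s ^ 2 * q / p by field_simp, div_le_iff₀ hp]
  calc s ^ 2 * q ≤ 1 * q := mul_le_mul_of_nonneg_right (sq_le_one_iff_abs_le_one s |>.mpr hs) hq0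
    _ ≤ r * p := by linarith

lemma sum_mul_div_sq_mul_dotProduct_le {k : ℕ} (G : Matrix (Fin d) (Fin k) ℝ) {p s : Fin n → ℝ}
    {c : ℝ} (hp : ∀ i, 0 ≤ p i) (hs : ∀ i, |s i| ≤ 1) (hc : 1 ≤ c) (hU : entry1Norm U ≤ α)
    (hrow : ∀ i, l1Norm (U i) ≤ c * α * p i) :
    ∑ i, p i * ((s i / p i) ^ 2 * ((U * G) i ⬝ᵥ (U * G) i)) ≤ (c * α * entry1Norm G) ^ 2 := by
  have hα : 0 ≤ α := (entry1Norm_nonneg U).trans hU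
  have hρ := entry1Norm_nonneg G
  have hterm : ∀ i, (U * G) i ⬝ᵥ (U * G) i ≤ p i * (c * α * entry1Norm G ^ 2 * l1Norm (U i)) := by
    intro i
    have hUi := l1Norm_nonneg (U i)
    calc (U * G) i ⬝ᵥ (U * G) i ≤ (l1Norm (U i) * entry1Norm G) ^ 2 :=
          (dotProduct_self_le_l1Norm_sq _).trans
            (pow_le_pow_left₀ (l1Norm_nonneg _) (l1Norm_vecMul_le _ _) 2)
      _ = l1Norm (U i) * (l1Norm (U i) * entry1Norm G ^ 2) := by ring
      _ ≤ c * α * p i * (l1Norm (U i) * entry1Norm G ^ 2) := by gcongr; exact hrow i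
      _ = p i * (c * α * entry1Norm G ^ 2 * l1Norm (U i)) := by ring
  calc ∑ i, p i * ((s i / p i) ^ 2 * ((U * G) i ⬝ᵥ (U * G) i))
      ≤ ∑ i, c * α * entry1Norm G ^ 2 * l1Norm (U i) :=
        sum_le_sum fun i _ => mul_div_sq_mul_le (hp i) (hs i)
          (sum_nonneg fun j _ => mul_self_nonneg _) (hterm i)
          (mul_nonneg (by positivity) (l1Norm_nonneg _))
    _ = c * α * entry1Norm G ^ 2 * entry1Norm U := by rw [← mul_sum, entry1Norm_eq_sum_l1Norm U]
    _ ≤ c * α * entry1Norm G ^ 2 * α := by gcongr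
    _ ≤ (c * α * entry1Norm G) ^ 2 := by
        nlinarith [mul_nonneg (mul_nonneg (sub_nonneg.mpr hc) (by linarith : (0 : ℝ) ≤ c))
          (sq_nonneg (α * entry1Norm G))]

lemma row_eq_zero_of_prob_eq_zero {A : Matrix (Fin n) (Fin d) ℝ} {R : Matrix (Fin d) (Fin d) ℝ}
    (hR : IsUnit R) {c : ℝ}
    (hrow : ∀ i, l1Norm ((A * R⁻¹) i) ≤ c * prob i) {i : Fin n} (hi : prob i = 0) : A i = 0 := by
  have hUi := le_antisymm (by simpa [hi] using hrow i) (l1Norm_nonneg _)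
  rw [← nonsing_inv_mul_cancel_right R A ((isUnit_iff_isUnit_det R).mp hR), mul_apply_eq_vecMul,
    l1Norm_eq_zero_iff.mp hUi, zero_vecMul]

lemma sum_mul_div_sq_mul_normHsq_le {A : Matrix (Fin n) (Fin d) ℝ} {R : Matrix (Fin d) (Fin d) ℝ}
    (hR : IsUnit R) (F : Matrix (Fin d) (Fin d) ℝ) {p s : Fin n → ℝ} {c : ℝ} (hp : ∀ i, 0 ≤ p i)
    (hs : ∀ i, |s i| ≤ 1) (hc : 1 ≤ c) (hU : entry1Norm (A * R⁻¹) ≤ α)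
    (hrow : ∀ i, l1Norm ((A * R⁻¹) i) ≤ c * α * p i) :
    ∑ i, p i * ((s i / p i) ^ 2 * normHsq (F * Fᵀ) (A i)) ≤ (c * α * entry1Norm (R * F)) ^ 2 := by
  have hAF : A * F = A * R⁻¹ * (R * F) := by
    rw [← Matrix.mul_assoc, nonsing_inv_mul_cancel_right _ _ ((isUnit_iff_isUnit_det R).mp hR)]
  simpa only [normHsq_mul_transpose, ← mul_apply_eq_vecMul, hAF] using
    sum_mul_div_sq_mul_dotProduct_le (R * F) hp hs hc hU hrow

end ImportanceSampling

theorem pwSGD_l1_expected_error_bound_general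
    (n d T : ℕ)
    (A : Matrix (Fin n) (Fin d) ℝ) (b : Fin n → ℝ)
    (f : (Fin d → ℝ) → ℝ) (hf : f = fun x => l1Norm (A *ᵥ x - b))
    (R : Matrix (Fin d) (Fin d) ℝ) (hR : IsUnit R)
    (α β : ℝ) (hcond : IsConditioned1 α β (A * R⁻¹))
    (γ : ℝ) (hγ0 : 0 ≤ γ) (hγ1 : γ < 1)
    (lam : Fin n → ℝ)
    (hlam : ∀ i, (1 - γ) * l1Norm ((A * R⁻¹) i) ≤ lam i ∧
                 lam i ≤ (1 + γ) * l1Norm ((A * R⁻¹) i))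
    (hlamsum : 0 < ∑ j, lam j)
    (prob : Fin n → ℝ) (hprob : ∀ i, prob i = lam i / ∑ j, lam j)
    (F : Matrix (Fin d) (Fin d) ℝ) (hF : IsUnit F)
    (H : Matrix (Fin d) (Fin d) ℝ) (hH : H = (F * Fᵀ)⁻¹)
    (Z : Set (Fin d → ℝ)) (hZcx : Convex ℝ Z)
    (x0 : Fin d → ℝ)
    (η : ℝ) (hη : 0 < η)
    (sgn : ℝ → ℝ) (hsgn : ∀ t : ℝ, t ≠ 0 → sgn t = t / |t|)
    (hsgn0 : sgn 0 ∈ Set.Icc (-1 : ℝ) 1)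
    -- the SGD trajectory, as a function of the sampled indices ξ₀, …, ξ_T
    (traj : (Fin (T+1) → Fin n) → ℕ → (Fin d → ℝ))
    (htraj0 : ∀ ξ, traj ξ 0 = x0)
    (htrajZ : ∀ ξ t, traj ξ t ∈ Z)
    (hupdate : ∀ ξ (t : Fin (T+1)),
      IsMinOn (fun x =>
          η * (sgn (A (ξ t) ⬝ᵥ traj ξ t.1 - b (ξ t)) / prob (ξ t)) * (A (ξ t) ⬝ᵥ x)
            + (1/2) * normHsq H (traj ξ t.1 - x)) Z (traj ξ (t.1 + 1)))
    (xbar : (Fin (T+1) → Fin n) → (Fin d → ℝ))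
    (hxbar : ∀ ξ, xbar ξ = ((T : ℝ) + 1)⁻¹ • ∑ t ∈ Finset.range (T+1), traj ξ t)
    (xstar : Fin d → ℝ) (hxstarZ : xstar ∈ Z)
    (c1 : ℝ) (hc1 : c1 = (1 + γ) / (1 - γ)) :
    (∑ ξ : Fin (T+1) → Fin n, (∏ t, prob (ξ t)) * f (xbar ξ)) - f xstar
      ≤ normHsq H (xstar - x0) / (2 * η * ((T : ℝ) + 1))
        + (η / 2) * (c1 * α * entry1Norm (R * F)) ^ 2 := by
  subst hH hc1
  have hp := prob_nonneg hγ1 hlam hlamsum hprob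
  have hp1 := sum_prob_eq_one hlamsum hprob
  have hrow := l1Norm_row_le_mul_prob hcond.2.1 hγ0 hγ1 hlam hlamsum hprob
  have hFF := posDef_mul_transpose_of_isUnit hF
  have hstep := expected_proxObjective_descent (g := fun i y => sgn (A i ⬝ᵥ y - b i) / prob i)
    (a := A) hFF.inv hZcx hp hp1 hη.le f hxstarZ
    (fun y => hf ▸ l1Norm_mulVec_sub_sub_le_sum A b hsgn hsgn0
      (fun _ => row_eq_zero_of_prob_eq_zero hR hrow) y xstar)
    (fun y => by
      rw [nonsing_inv_nonsing_inv _ ((isUnit_iff_isUnit_det _).mp hFF.isUnit)]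
      exact sum_mul_div_sq_mul_normHsq_le hR F hp (fun i => abs_sgn_le_one hsgn hsgn0 _)
        ((one_le_div (by linarith)).mpr (by linarith)) hcond.2.1 hrow)
    (fun ξ ξ' => by rw [htraj0, htraj0]) htrajZ hupdate
  calc iidExpect prob (fun ξ => f (xbar ξ)) - f xstar
      ≤ ((T : ℝ) + 1)⁻¹ * ∑ t ∈ range (T + 1), iidExpect prob (fun ξ => f (traj ξ t))
        - f xstar := by
        gcongr
        simpa only [hxbar] using
          (hf ▸ convexOn_l1Norm_mulVec_sub A b).iidExpect_map_average_le hp traj T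
    _ ≤ iidExpect prob (fun ξ => normHsq (F * Fᵀ)⁻¹ (xstar - traj ξ 0)) / (2 * η * ((T : ℝ) + 1))
        + η / 2 * ((1 + γ) / (1 - γ) * α * entry1Norm (R * F)) ^ 2 :=
      average_sub_le_of_telescoping (a := fun t => iidExpect prob (fun ξ => f (traj ξ t)))
        (D := fun t => iidExpect prob (fun ξ => normHsq (F * Fᵀ)⁻¹ (xstar - traj ξ t))) hη
        (iidExpect_nonneg hp fun ξ => hFF.inv.posSemidef.normHsq_nonneg _)
        fun t ht => hstep ⟨t, ht⟩
    _ = _ := by simp only [htraj0, iidExpect_const hp1]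

theorem pwSGD_l1_expected_error_bound
    (n d T : ℕ)
    (A : Matrix (Fin n) (Fin d) ℝ) (hrank : A.rank = d) (b : Fin n → ℝ)
    (f : (Fin d → ℝ) → ℝ) (hf : f = fun x => l1Norm (A *ᵥ x - b))
    (R : Matrix (Fin d) (Fin d) ℝ) (hR : IsUnit R)
    (α β : ℝ) (hcond : IsConditioned1 α β (A * R⁻¹))
    (γ : ℝ) (hγ0 : 0 ≤ γ) (hγ1 : γ < 1)
    (lam : Fin n → ℝ)
    (hlam : ∀ i, (1 - γ) * l1Norm ((A * R⁻¹) i) ≤ lam i ∧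
                 lam i ≤ (1 + γ) * l1Norm ((A * R⁻¹) i))
    (hlamsum : 0 < ∑ j, lam j)
    (prob : Fin n → ℝ) (hprob : ∀ i, prob i = lam i / ∑ j, lam j)
    (F : Matrix (Fin d) (Fin d) ℝ) (hF : IsUnit F)
    (H : Matrix (Fin d) (Fin d) ℝ) (hH : H = (F * Fᵀ)⁻¹)
    (Z : Set (Fin d → ℝ)) (hZne : Z.Nonempty) (hZcl : IsClosed Z) (hZcx : Convex ℝ Z)
    (x0 : Fin d → ℝ) (hx0 : x0 ∈ Z)
    (η : ℝ) (hη : 0 < η)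
    (sgn : ℝ → ℝ) (hsgn : ∀ t : ℝ, t ≠ 0 → sgn t = t / |t|)
    (hsgn0 : sgn 0 ∈ Set.Icc (-1 : ℝ) 1)
    -- the SGD trajectory, as a function of the sampled indices ξ₀, …, ξ_T
    (traj : (Fin (T+1) → Fin n) → ℕ → (Fin d → ℝ))
    (htraj0 : ∀ ξ, traj ξ 0 = x0)
    (htrajZ : ∀ ξ t, traj ξ t ∈ Z)
    (hupdate : ∀ ξ (t : Fin (T+1)),
      IsMinOn (fun x =>
          η * (sgn (A (ξ t) ⬝ᵥ traj ξ t.1 - b (ξ t)) / prob (ξ t)) * (A (ξ t) ⬝ᵥ x)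
            + (1/2) * normHsq H (traj ξ t.1 - x)) Z (traj ξ (t.1 + 1)))
    (xbar : (Fin (T+1) → Fin n) → (Fin d → ℝ))
    (hxbar : ∀ ξ, xbar ξ = ((T : ℝ) + 1)⁻¹ • ∑ t ∈ Finset.range (T+1), traj ξ t)
    (xstar : Fin d → ℝ) (hxstarZ : xstar ∈ Z) (hxstar : ∀ x ∈ Z, f xstar ≤ f x)
    (c1 : ℝ) (hc1 : c1 = (1 + γ) / (1 - γ)) :
    (∑ ξ : Fin (T+1) → Fin n, (∏ t, prob (ξ t)) * f (xbar ξ)) - f xstar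
      ≤ normHsq H (xstar - x0) / (2 * η * ((T : ℝ) + 1))
        + (η / 2) * (c1 * α * entry1Norm (R * F)) ^ 2 :=
  pwSGD_l1_expected_error_bound_general n d T A b f hf R hR α β hcond γ hγ0 hγ1 lam hlam hlamsum
    prob hprob F hF H hH Z hZcx x0 η hη sgn hsgn hsgn0 traj htraj0 htrajZ hupdate xbar hxbar xstar
    hxstarZ c1 hc1
end

section
/- Let X ⊆ ℝ^d be nonempty, closed and convex, let f_1,…,f_n : ℝ^d → ℝ be convex and differentiable with each gradient ∇f_i Lipschitz with constant L_i, let P = (p_1,…,p_n) be a probability distribution with p_i > 0, and let f(x) = Σ_i p_i f_i(x) be μ-strongly convex (μ > 0). Let x* be the minimizer of f over X, σ² = Σ_i p_i ‖∇f_i(x*)‖₂², and sup L = max_i L_i. Fix 0 < η with η·sup L < 1, x₀ ∈ X, sample ξ₀, ξ₁, … i.i.d. from P, and iterate x_{t+1} = Π_X(x_t − η∇f_{ξ_t}(x_t)), where Π_X is the Euclidean projection onto X. Then for every T, E[‖x_T − x*‖₂²] ≤ (1 − 2ημ(1 − η·sup L))^T · ‖x₀ − x*‖₂² + ησ²/(μ(1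 − η·sup L)). -/
open Finset
open scoped RealInnerProductSpace

section SGDAux
variable {F : Type*} [NormedAddCommGroup F] [InnerProductSpace ℝ F] [CompleteSpace F]

lemma sgd_line_hasDerivAt {h : F → ℝ} {G : F} (x v : F) (t : ℝ)
    (hg : HasGradientAt h G (x + t • v)) :
    HasDerivAt (fun s : ℝ => h (x + s • v)) ⟪G, v⟫ t := by
  have hc : HasDerivAt (fun s : ℝ => x + s • v) v t := by
    simpa using ((hasDerivAt_id t).smul_const v).const_add x
  have := hg.hasFDerivAt.comp_hasDerivAt t hc
  simp at this
  exact this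

lemma sgd_convex_first_order {h : F → ℝ} {G : F → F}
    (hconv : ConvexOn ℝ Set.univ h) (hg : ∀ z, HasGradientAt h (G z) z) (x y : F) :
    h x + ⟪G x, y - x⟫ ≤ h y := by
  set ψ : ℝ → ℝ := fun s => h (x + s • (y - x)) with hψ
  have hconvψ : ConvexOn ℝ Set.univ ψ := by
    have := hconv.comp_affineMap (AffineMap.lineMap x y : ℝ →ᵃ[ℝ] F)
    have heq : ψ = h ∘ (AffineMap.lineMap x y : ℝ →ᵃ[ℝ] F) := by
      funext s
      simp [ψ, AffineMap.lineMap_apply, add_comm]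
    rw [heq]
    simpa using this
  have hd : HasDerivAt ψ ⟪G x, y - x⟫ 0 := by
    have := sgd_line_hasDerivAt (G := G x) x (y - x) 0 (by simpa using hg x)
    simpa using this
  have hslope := hconvψ.le_slope_of_hasDerivAt (Set.mem_univ 0) (Set.mem_univ 1)
    (by norm_num) hd
  have h0 : ψ 0 = h x := by simp [ψ]
  have h1 : ψ 1 = h y := by simp [ψ]
  rw [slope_def_field] at hslope
  simp [h0, h1] at hslope
  linarith [hslope]

lemma sgd_descent {h : F → ℝ} {G : F → F} (hg : ∀ z, HasGradientAt h (G z) z)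
    {l : ℝ} (hLip : ∀ z w, ‖G z - G w‖ ≤ l * ‖z - w‖) (x y : F) :
    h y ≤ h x + ⟪G x, y - x⟫ + l / 2 * ‖y - x‖ ^ 2 := by
  set v := y - x with hv
  set Φ : ℝ → ℝ := fun s => h (x + s • v) - s * ⟪G x, v⟫ - l / 2 * s ^ 2 * ‖v‖ ^ 2 with hΦ
  have hder : ∀ s : ℝ, HasDerivAt Φ (⟪G (x + s • v), v⟫ - ⟪G x, v⟫ - l / 2 * (2 * s) * ‖v‖ ^ 2) s := by
    intro s
    have h1 : HasDerivAt (fun s : ℝ => h (x + s • v)) ⟪G (x + s • v), v⟫ s :=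
      sgd_line_hasDerivAt x v s (hg _)
    have h2 : HasDerivAt (fun s : ℝ => s * ⟪G x, v⟫) ⟪G x, v⟫ s := by
      simpa using (hasDerivAt_id s).mul_const ⟪G x, v⟫
    have h3 : HasDerivAt (fun s : ℝ => l / 2 * s ^ 2 * ‖v‖ ^ 2) (l / 2 * (2 * s) * ‖v‖ ^ 2) s := by
      have : HasDerivAt (fun s : ℝ => s ^ 2) (2 * s) s := by
        simpa using hasDerivAt_pow 2 s
      have h4 := (this.const_mul (l / 2)).mul_const (‖v‖ ^ 2)
      convert h4 using 2 <;> ring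
    exact (h1.sub h2).sub h3
  have hanti : AntitoneOn Φ (Set.Icc 0 1) := by
    apply antitoneOn_of_deriv_nonpos (convex_Icc 0 1)
    · exact fun s _ => ((hder s).differentiableAt).continuousAt.continuousWithinAt
    · intro s hs
      exact (hder s).differentiableAt.differentiableWithinAt
    · intro s hs
      rw [interior_Icc] at hs
      rw [(hder s).deriv]
      have hb : ⟪G (x + s • v) - G x, v⟫ ≤ l * s * ‖v‖ ^ 2 := by
        calc ⟪G (x + s • v) - G x, v⟫ ≤ ‖G (x + s • v) - G x‖ * ‖v‖ := real_inner_le_norm _ _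
        _ ≤ (l * ‖(x + s • v) - x‖) * ‖v‖ :=
            mul_le_mul_of_nonneg_right (hLip _ _) (norm_nonneg _)
        _ = l * s * ‖v‖ ^ 2 := by
            rw [add_sub_cancel_left, norm_smul]
            simp [abs_of_pos hs.1]
            ring
      rw [inner_sub_left] at hb
      nlinarith [hb]
  have hΦ10 := hanti (Set.mem_Icc.2 ⟨le_refl 0, zero_le_one⟩)
    (Set.mem_Icc.2 ⟨zero_le_one, le_refl 1⟩) zero_le_one
  have h0 : Φ 0 = h x := by simp [Φ]
  have h1 : Φ 1 = h y - ⟪G x, v⟫ - l / 2 * ‖v‖ ^ 2 := by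
    have hxy : x + (1 : ℝ) • v = y := by simp [hv]
    simp only [Φ, hxy, one_pow, one_mul, mul_one]
  rw [h0, h1] at hΦ10
  linarith

lemma sgd_grad_sub_linear {h : F → ℝ} {G : F → F} (hg : ∀ z, HasGradientAt h (G z) z)
    (c : F) (z : F) : HasGradientAt (fun w => h w - ⟪c, w⟫) (G z - c) z := by
  rw [hasGradientAt_iff_hasFDerivAt, map_sub]
  exact (hg z).hasFDerivAt.sub (by
    exact (InnerProductSpace.toDual ℝ F c).hasFDerivAt)

lemma sgd_coco_half {h : F → ℝ} {G : F → F}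
    (hconv : ConvexOn ℝ Set.univ h) (hg : ∀ z, HasGradientAt h (G z) z)
    {l : ℝ} (hl : 0 < l) (hLip : ∀ z w, ‖G z - G w‖ ≤ l * ‖z - w‖) (x y : F) :
    1 / (2 * l) * ‖G y - G x‖ ^ 2 ≤ h y - h x - ⟪G x, y - x⟫ := by
  set φ : F → F → ℝ := fun x w => h w - ⟪G x, w⟫ with hφ
  have hgφ : ∀ x z, HasGradientAt (φ x) (G z - G x) z := fun x z =>
    sgd_grad_sub_linear hg (G x) z
  have hLipφ : ∀ z w, ‖(G z - G x) - (G w - G x)‖ ≤ l * ‖z - w‖ := by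
    intro z w; simpa using hLip z w
  have hmin : ∀ w, φ x x ≤ φ x w := by
    intro w
    have := sgd_convex_first_order hconv hg x w
    simp only [φ, inner_sub_right] at *
    linarith
  have hstep := sgd_descent (hgφ x) hLipφ y (y - (1 / l) • (G y - G x))
  have e1 : (y - (1 / l) • (G y - G x)) - y = -((1 / l) • (G y - G x)) := by abel
  rw [e1] at hstep
  have e2 : ⟪G y - G x, -((1 / l) • (G y - G x))⟫ = -(1 / l) * ‖G y - G x‖ ^ 2 := by
    rw [inner_neg_right, real_inner_smul_right, real_inner_self_eq_norm_sq]
    ring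
  have e3 : ‖-((1 / l) • (G y - G x))‖ ^ 2 = (1 / l) ^ 2 * ‖G y - G x‖ ^ 2 := by
    rw [norm_neg, norm_smul, mul_pow, Real.norm_eq_abs, abs_of_pos (by positivity : (0:ℝ) < 1 / l)]
  rw [e2, e3] at hstep
  have hmm := hmin (y - (1 / l) • (G y - G x))
  have : φ x x ≤ φ x y - 1 / (2 * l) * ‖G y - G x‖ ^ 2 := by
    have hl' : l ≠ 0 := ne_of_gt hl
    calc φ x x ≤ φ x (y - (1 / l) • (G y - G x)) := hmm
    _ ≤ φ x y + (-(1 / l) * ‖G y - G x‖ ^ 2) + l / 2 * ((1 / l) ^ 2 * ‖G y - G x‖ ^ 2) := hstep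
    _ = φ x y - 1 / (2 * l) * ‖G y - G x‖ ^ 2 := by field_simp; ring
  simp only [φ, inner_sub_right] at this ⊢
  linarith

lemma sgd_coco {h : F → ℝ} {G : F → F}
    (hconv : ConvexOn ℝ Set.univ h) (hg : ∀ z, HasGradientAt h (G z) z)
    {l : ℝ} (hl : 0 ≤ l) (hLip : ∀ z w, ‖G z - G w‖ ≤ l * ‖z - w‖) (x y : F) :
    ‖G x - G y‖ ^ 2 ≤ l * ⟪G x - G y, x - y⟫ := by
  rcases eq_or_lt_of_le hl with hl0 | hl0
  · have : ‖G x - G y‖ ≤ 0 := by simpa [← hl0] using hLip x y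
    have hz : ‖G x - G y‖ = 0 := le_antisymm this (norm_nonneg _)
    rw [← hl0, hz]
    norm_num
  · have h1 := sgd_coco_half hconv hg hl0 hLip x y
    have h2 := sgd_coco_half hconv hg hl0 hLip y x
    have e1 : ‖G y - G x‖ = ‖G x - G y‖ := norm_sub_rev _ _
    rw [e1] at h1
    have key : 2 * (1 / (2 * l)) * ‖G x - G y‖ ^ 2 ≤ ⟪G x - G y, x - y⟫ := by
      have : ⟪G x, y - x⟫ + ⟪G y, x - y⟫ = -⟪G x - G y, x - y⟫ := by
        rw [inner_sub_left]
        have : ⟪G x, y - x⟫ = -⟪G x, x - y⟫ := by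
          rw [← inner_neg_right]; congr 1; abel
        rw [this]; ring
      linarith [h1, h2, this.ge, this.le]
    have : 2 * (1 / (2 * l)) = 1 / l := by field_simp
    rw [this] at key
    have := mul_le_mul_of_nonneg_left key (le_of_lt hl0)
    calc ‖G x - G y‖ ^ 2 = l * (1 / l * ‖G x - G y‖ ^ 2) := by field_simp
    _ ≤ l * ⟪G x - G y, x - y⟫ := this

lemma sgd_proj_vi {X : Set F} (hXcx : Convex ℝ X) {u p : F} (hp : p ∈ X)
    (hmin : IsMinOn (fun z => ‖z - u‖) X p) : ∀ z ∈ X, ⟪u - p, z - p⟫ ≤ 0 := by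
  haveI : Nonempty X := ⟨⟨p, hp⟩⟩
  have heq : ‖u - p‖ = ⨅ w : X, ‖u - w‖ := by
    refine le_antisymm ?_ ?_
    · refine le_ciInf fun w => ?_
      have := hmin w.2
      simpa [norm_sub_rev u] using this
    · exact ciInf_le ⟨0, fun b ⟨w, hw⟩ => hw ▸ norm_nonneg _⟩ (⟨p, hp⟩ : X)
  exact (norm_eq_iInf_iff_real_inner_le_zero hXcx hp).1 heq

lemma sgd_proj_contract {X : Set F} (hXcx : Convex ℝ X) {u p : F} (hp : p ∈ X)
    (hmin : IsMinOn (fun z => ‖z - u‖) X p) : ∀ z ∈ X, ‖p - z‖ ^ 2 ≤ ‖u - z‖ ^ 2 := by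
  intro z hz
  have hvi := sgd_proj_vi hXcx hp hmin z hz
  have hexp : ‖u - z‖ ^ 2 = ‖u - p‖ ^ 2 + 2 * ⟪u - p, p - z⟫ + ‖p - z‖ ^ 2 := by
    have : u - z = (u - p) + (p - z) := by abel
    rw [this, norm_add_sq_real]
  have hge : 0 ≤ ⟪u - p, p - z⟫ := by
    have h' : ⟪u - p, p - z⟫ = -⟪u - p, z - p⟫ := by
      rw [← inner_neg_right]; congr 1; abel
    linarith [h'.ge, h'.le]
  nlinarith [sq_nonneg ‖u - p‖]

lemma sgd_proj_unique {X : Set F} (hXcx : Convex ℝ X) {u p q : F} (hp : p ∈ X) (hq : q ∈ X)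
    (hminp : IsMinOn (fun z => ‖z - u‖) X p) (hminq : IsMinOn (fun z => ‖z - u‖) X q) :
    p = q := by
  have h1 := sgd_proj_vi hXcx hp hminp q hq
  have h2 := sgd_proj_vi hXcx hq hminq p hp
  have e2 : ⟪u - q, p - q⟫ = -⟪u - q, q - p⟫ := by
    rw [← inner_neg_right]; congr 1; abel
  have hsum : ⟪(u - p) - (u - q), q - p⟫ ≤ 0 := by
    rw [inner_sub_left]; linarith [e2.symm.le, e2.symm.ge]
  have h3 : (u - p) - (u - q) = q - p := by abel
  rw [h3, real_inner_self_eq_norm_sq] at hsum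
  have h4 : ‖q - p‖ = 0 := by nlinarith [norm_nonneg (q - p)]
  have := norm_eq_zero.1 h4
  symm; exact sub_eq_zero.1 this

end SGDAux

set_option maxHeartbeats 2000000 in
theorem sgd_strongly_convex_bound
    (n d T : ℕ) (hn : 0 < n)
    (X : Set (EuclideanSpace ℝ (Fin d)))
    (hXne : X.Nonempty) (hXcl : IsClosed X) (hXcx : Convex ℝ X)
    (f : Fin n → EuclideanSpace ℝ (Fin d) → ℝ)
    (hfconv : ∀ i, ConvexOn ℝ Set.univ (f i))
    (g : Fin n → EuclideanSpace ℝ (Fin d) → EuclideanSpace ℝ (Fin d))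
    (hgrad : ∀ i x, HasGradientAt (f i) (g i x) x)
    (L : Fin n → ℝ) (hLip : ∀ i x y, ‖g i x - g i y‖ ≤ L i * ‖x - y‖)
    (prob : Fin n → ℝ) (hprob0 : ∀ i, 0 < prob i) (hprob1 : ∑ i, prob i = 1)
    (fbar : EuclideanSpace ℝ (Fin d) → ℝ) (hfbar : fbar = fun x => ∑ i, prob i * f i x)
    (μ : ℝ) (hμ : 0 < μ)
    -- μ-strong convexity of fbar on X (the gradient of fbar is ∑ i, prob i • g i x)
    (hsc : ∀ x ∈ X, ∀ y ∈ X,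
      fbar x + ⟪(∑ i, prob i • g i x), y - x⟫ + μ / 2 * ‖y - x‖ ^ 2 ≤ fbar y)
    (xstar : EuclideanSpace ℝ (Fin d)) (hxstarX : xstar ∈ X)
    (hxstar : ∀ x ∈ X, fbar xstar ≤ fbar x)
    (σ2 : ℝ) (hσ2 : σ2 = ∑ i, prob i * ‖g i xstar‖ ^ 2)
    (supL : ℝ) (hsupL : supL = ⨆ i, L i)
    (η : ℝ) (hη : 0 < η) (hηL : η * supL < 1)
    (x0 : EuclideanSpace ℝ (Fin d)) (hx0 : x0 ∈ X)
    -- the SGD trajectory with Euclidean projection onto X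
    (traj : (Fin T → Fin n) → ℕ → EuclideanSpace ℝ (Fin d))
    (htraj0 : ∀ ξ, traj ξ 0 = x0)
    (htrajX : ∀ ξ t, traj ξ t ∈ X)
    (hupdate : ∀ ξ (t : Fin T),
      IsMinOn (fun z => ‖z - (traj ξ t.1 - η • g (ξ t) (traj ξ t.1))‖) X
        (traj ξ (t.1 + 1))) :
    ∑ ξ : Fin T → Fin n, (∏ t, prob (ξ t)) * ‖traj ξ T - xstar‖ ^ 2
      ≤ (1 - 2 * η * μ * (1 - η * supL)) ^ T * ‖x0 - xstar‖ ^ 2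
        + η * σ2 / (μ * (1 - η * supL)) := by
  classical
  have hη1 : 0 < 1 - η * supL := by linarith
  have hσ2nn : 0 ≤ σ2 := by
    rw [hσ2]
    exact Finset.sum_nonneg fun i _ => mul_nonneg (hprob0 i).le (sq_nonneg _)
  by_cases hss : ∀ a ∈ X, ∀ b ∈ X, a = b
  · -- X is a subsingleton
    have hT : ∀ ξ, traj ξ T = xstar := fun ξ => hss _ (htrajX ξ T) _ hxstarX
    have hx0s : x0 = xstar := hss _ hx0 _ hxstarX
    have hL : (∑ ξ : Fin T → Fin n, (∏ t, prob (ξ t)) * ‖traj ξ T - xstar‖ ^ 2) = 0 := by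
      apply Finset.sum_eq_zero
      intro ξ _
      rw [hT ξ]
      simp
    rw [hL, hx0s]
    have h0 : (0:ℝ) ≤ η * σ2 / (μ * (1 - η * supL)) :=
      div_nonneg (mul_nonneg hη.le hσ2nn) (mul_nonneg hμ.le hη1.le)
    simpa using h0
  · push_neg at hss
    obtain ⟨a, haX, b, hbX, hab⟩ := hss
    set Gbar : EuclideanSpace ℝ (Fin d) → EuclideanSpace ℝ (Fin d) :=
      fun x => ∑ i, prob i • g i x with hGbar
    have i0 : Fin n := ⟨0, hn⟩
    have hL0 : ∀ i, 0 ≤ L i := by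
      intro i
      have h1 : (0:ℝ) ≤ L i * ‖a - b‖ := le_trans (norm_nonneg _) (hLip i a b)
      have h2 : 0 < ‖a - b‖ := norm_pos_iff.2 (sub_ne_zero.2 hab)
      nlinarith
    have hLsup : ∀ i, L i ≤ supL := by
      intro i
      rw [hsupL]
      exact le_ciSup (Set.Finite.bddAbove (Set.finite_range L)) i
    have hsupL0 : 0 ≤ supL := le_trans (hL0 i0) (hLsup i0)
    have hLipSup : ∀ i x y, ‖g i x - g i y‖ ≤ supL * ‖x - y‖ := fun i x y =>
      le_trans (hLip i x y) (mul_le_mul_of_nonneg_right (hLsup i) (norm_nonneg _))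
    -- strong monotonicity of Gbar on X
    have hmono : ∀ x ∈ X, ∀ y ∈ X, μ * ‖x - y‖ ^ 2 ≤ ⟪Gbar x - Gbar y, x - y⟫ := by
      intro x hx y hy
      have h1 : fbar x + ⟪Gbar x, y - x⟫ + μ / 2 * ‖y - x‖ ^ 2 ≤ fbar y := hsc x hx y hy
      have h2 : fbar y + ⟪Gbar y, x - y⟫ + μ / 2 * ‖x - y‖ ^ 2 ≤ fbar x := hsc y hy x hx
      rw [norm_sub_rev y x] at h1
      have e2 : ⟪Gbar x, y - x⟫ = -⟪Gbar x, x - y⟫ := by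
        rw [← inner_neg_right]; congr 1; abel
      rw [inner_sub_left]
      linarith [e2.le, e2.ge]
    -- ‖Gbar x - Gbar y‖ ≤ supL * ‖x - y‖
    have hGbarLip : ∀ x y, ‖Gbar x - Gbar y‖ ≤ supL * ‖x - y‖ := by
      intro x y
      have e : Gbar x - Gbar y = ∑ i, prob i • (g i x - g i y) := by
        rw [hGbar, ← Finset.sum_sub_distrib]
        exact Finset.sum_congr rfl fun i _ => (smul_sub _ _ _).symm
      rw [e]
      calc ‖∑ i, prob i • (g i x - g i y)‖ ≤ ∑ i, ‖prob i • (g i x - g i y)‖ :=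
            norm_sum_le _ _
      _ ≤ ∑ i, prob i * (supL * ‖x - y‖) := by
            apply Finset.sum_le_sum
            intro i _
            rw [norm_smul, Real.norm_eq_abs, abs_of_pos (hprob0 i)]
            exact mul_le_mul_of_nonneg_left (hLipSup i x y) (hprob0 i).le
      _ = supL * ‖x - y‖ := by rw [← Finset.sum_mul, hprob1, one_mul]
    have hμsupL : μ ≤ supL := by
      have h1 := hmono a haX b hbX
      have h2 : ⟪Gbar a - Gbar b, a - b⟫ ≤ supL * ‖a - b‖ ^ 2 := by
        calc ⟪Gbar a - Gbar b, a - b⟫ ≤ ‖Gbar a - Gbar b‖ * ‖a - b‖ := real_inner_le_norm _ _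
        _ ≤ (supL * ‖a - b‖) * ‖a - b‖ :=
            mul_le_mul_of_nonneg_right (hGbarLip a b) (norm_nonneg _)
        _ = supL * ‖a - b‖ ^ 2 := by ring
      have h3 : 0 < ‖a - b‖ ^ 2 := by
        have hne : a - b ≠ 0 := sub_ne_zero.2 hab
        exact pow_pos (norm_pos_iff.2 hne) 2
      nlinarith
    have hr0 : 0 ≤ 1 - 2 * η * μ * (1 - η * supL) := by
      nlinarith [mul_nonneg (mul_nonneg hη.le hη1.le) (sub_nonneg.2 hμsupL),
        sq_nonneg (2 * η * supL - 1)]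
    -- fbar has gradient Gbar
    have hgradbar : ∀ z, HasGradientAt fbar (Gbar z) z := by
      intro z
      rw [hasGradientAt_iff_hasFDerivAt]
      have h1 : HasFDerivAt (fun x => ∑ i, prob i * f i x)
          (∑ i, prob i • (InnerProductSpace.toDual ℝ (EuclideanSpace ℝ (Fin d)) (g i z))) z :=
        HasFDerivAt.fun_sum fun i _ => (hgrad i z).hasFDerivAt.const_mul (prob i)
      rw [hfbar]
      convert h1 using 1
      · rfl
      · rfl
      rw [hGbar]
      simp [map_sum, map_smul]
    -- variational inequality at the minimizer
    have hVI : ∀ x ∈ X, 0 ≤ ⟪Gbar xstar, x - xstar⟫ := by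
      intro x hx
      have hlmin : IsLocalMinOn fbar X xstar := (isMinOn_iff.2 fun z hz => hxstar z hz).localize
      have hcone : x - xstar ∈ posTangentConeAt X xstar :=
        sub_mem_posTangentConeAt_of_segment_subset (hXcx.segment_subset hxstarX hx)
      have h0 := hlmin.hasFDerivWithinAt_nonneg
        ((hgradbar xstar).hasFDerivAt.hasFDerivWithinAt) hcone
      simpa using h0
    -- the key one-step expectation inequality
    have key : ∀ x ∈ X,
        (∑ i, prob i * (‖x - xstar‖ ^ 2 - 2 * η * ⟪g i x, x - xstar⟫ + η ^ 2 * ‖g i x‖ ^ 2))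
          ≤ (1 - 2 * η * μ * (1 - η * supL)) * ‖x - xstar‖ ^ 2 + 2 * η ^ 2 * σ2 := by
      intro x hx
      set v := x - xstar with hv
      have hsum1 : ∑ i, prob i * ⟪g i x, v⟫ = ⟪Gbar x, v⟫ := by
        rw [hGbar]
        rw [sum_inner]
        exact Finset.sum_congr rfl fun i _ => (real_inner_smul_left _ _ _).symm
      have hediff : Gbar x - Gbar xstar = ∑ i, prob i • (g i x - g i xstar) := by
        rw [hGbar, ← Finset.sum_sub_distrib]
        exact Finset.sum_congr rfl fun i _ => (smul_sub _ _ _).symm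
      have hsum2 : ∑ i, prob i * ⟪g i x - g i xstar, v⟫ = ⟪Gbar x - Gbar xstar, v⟫ := by
        rw [hediff, sum_inner]
        exact Finset.sum_congr rfl fun i _ => (real_inner_smul_left _ _ _).symm
      have hM := hmono x hx xstar hxstarX
      rw [← hv] at hM
      have hS := hVI x hx
      rw [← hv] at hS
      have hD : (∑ i, prob i * ‖g i x - g i xstar‖ ^ 2) ≤ supL * ⟪Gbar x - Gbar xstar, v⟫ := by
        rw [← hsum2, Finset.mul_sum]
        apply Finset.sum_le_sum
        intro i _
        have hc := sgd_coco (hfconv i) (hgrad i) hsupL0 (hLipSup i) x xstar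
        rw [← hv] at hc
        calc prob i * ‖g i x - g i xstar‖ ^ 2
            ≤ prob i * (supL * ⟪g i x - g i xstar, v⟫) :=
              mul_le_mul_of_nonneg_left hc (hprob0 i).le
          _ = supL * (prob i * ⟪g i x - g i xstar, v⟫) := by ring
      have hBnd : (∑ i, prob i * ‖g i x‖ ^ 2)
          ≤ 2 * (∑ i, prob i * ‖g i x - g i xstar‖ ^ 2) + 2 * σ2 := by
        rw [hσ2, Finset.mul_sum, Finset.mul_sum, ← Finset.sum_add_distrib]
        apply Finset.sum_le_sum
        intro i _
        have hai : ‖g i x‖ ≤ ‖g i x - g i xstar‖ + ‖g i xstar‖ := by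
          calc ‖g i x‖ = ‖(g i x - g i xstar) + g i xstar‖ := by congr 1; abel
          _ ≤ _ := norm_add_le _ _
        have hsq : ‖g i x‖ ^ 2 ≤ 2 * ‖g i x - g i xstar‖ ^ 2 + 2 * ‖g i xstar‖ ^ 2 := by
          nlinarith [hai, norm_nonneg (g i x),
            sq_nonneg (‖g i x - g i xstar‖ - ‖g i xstar‖)]
        nlinarith [mul_le_mul_of_nonneg_left hsq (hprob0 i).le]
      have hexp : (∑ i, prob i * (‖v‖ ^ 2 - 2 * η * ⟪g i x, v⟫ + η ^ 2 * ‖g i x‖ ^ 2))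
          = ‖v‖ ^ 2 - 2 * η * ⟪Gbar x, v⟫
            + η ^ 2 * (∑ i, prob i * ‖g i x‖ ^ 2) := by
        calc ∑ i, prob i * (‖v‖ ^ 2 - 2 * η * ⟪g i x, v⟫ + η ^ 2 * ‖g i x‖ ^ 2)
            = ∑ i, (prob i * ‖v‖ ^ 2 - 2 * η * (prob i * ⟪g i x, v⟫)
                + η ^ 2 * (prob i * ‖g i x‖ ^ 2)) :=
              Finset.sum_congr rfl fun i _ => by ring
          _ = (∑ i, prob i) * ‖v‖ ^ 2 - 2 * η * (∑ i, prob i * ⟪g i x, v⟫)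
                + η ^ 2 * (∑ i, prob i * ‖g i x‖ ^ 2) := by
              rw [Finset.sum_add_distrib, Finset.sum_sub_distrib, ← Finset.mul_sum,
                ← Finset.mul_sum, Finset.sum_mul]
          _ = _ := by rw [hprob1, one_mul, hsum1]
      rw [hexp]
      have hsplit : ⟪Gbar x, v⟫ = ⟪Gbar x - Gbar xstar, v⟫ + ⟪Gbar xstar, v⟫ := by
        rw [inner_sub_left]; ring
      rw [hsplit]
      have k1 : 0 ≤ 2 * η * (1 - η * supL) * (⟪Gbar x - Gbar xstar, v⟫ - μ * ‖v‖ ^ 2) :=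
        mul_nonneg (by nlinarith) (by linarith)
      have k2 : 0 ≤ η ^ 2 * (supL * ⟪Gbar x - Gbar xstar, v⟫
          - (∑ i, prob i * ‖g i x - g i xstar‖ ^ 2)) :=
        mul_nonneg (sq_nonneg η) (by linarith)
      have k3 : 0 ≤ 2 * η * ⟪Gbar xstar, v⟫ := mul_nonneg (by linarith) hS
      have k4 := mul_le_mul_of_nonneg_left hBnd (sq_nonneg η)
      nlinarith [k1, k2, k3, k4]
    -- probability weights
    set W : (Fin T → Fin n) → ℝ := fun ξ => ∏ t, prob (ξ t) with hW
    have goaleq : (∑ ξ : Fin T → Fin n, (∏ t, prob (ξ t)) * ‖traj ξ T - xstar‖ ^ 2)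
        = ∑ ξ : Fin T → Fin n, W ξ * ‖traj ξ T - xstar‖ ^ 2 := rfl
    rw [goaleq]
    have hW0 : ∀ ξ, 0 ≤ W ξ := fun ξ => Finset.prod_nonneg fun s _ => (hprob0 _).le
    have hWsum : ∑ ξ : Fin T → Fin n, W ξ = 1 := by
      have h := Finset.prod_univ_sum (fun _ : Fin T => (Finset.univ : Finset (Fin n)))
        (fun _ i => prob i)
      rw [Fintype.piFinset_univ] at h
      rw [hW, ← h]
      simp [hprob1]
    -- trajectories only depend on past coordinates
    have traj_agree : ∀ t, t ≤ T → ∀ ξ ξ' : Fin T → Fin n,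
        (∀ s : Fin T, (s : ℕ) < t → ξ s = ξ' s) → traj ξ t = traj ξ' t := by
      intro t
      induction t with
      | zero => intro _ ξ ξ' _; rw [htraj0, htraj0]
      | succ t ih =>
        intro ht ξ ξ' hagree
        have ht' : t < T := Nat.lt_of_succ_le ht
        have hxt : traj ξ t = traj ξ' t :=
          ih (le_of_lt ht') ξ ξ' fun s hs => hagree s (lt_trans hs (Nat.lt_succ_self t))
        have hcoord : ξ ⟨t, ht'⟩ = ξ' ⟨t, ht'⟩ := hagree ⟨t, ht'⟩ (Nat.lt_succ_self t)
        have h1 : IsMinOn (fun z => ‖z - (traj ξ t - η • g (ξ ⟨t, ht'⟩) (traj ξ t))‖) X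
            (traj ξ (t + 1)) := hupdate ξ ⟨t, ht'⟩
        have h2 : IsMinOn (fun z => ‖z - (traj ξ' t - η • g (ξ' ⟨t, ht'⟩) (traj ξ' t))‖) X
            (traj ξ' (t + 1)) := hupdate ξ' ⟨t, ht'⟩
        rw [← hxt, ← hcoord] at h2
        exact sgd_proj_unique hXcx (htrajX ξ (t + 1)) (htrajX ξ' (t + 1)) h1 h2
    -- one-step inequality in expectation
    have hstep : ∀ t, t < T →
        (∑ ξ : Fin T → Fin n, W ξ * ‖traj ξ (t + 1) - xstar‖ ^ 2)
          ≤ (1 - 2 * η * μ * (1 - η * supL))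
              * (∑ ξ : Fin T → Fin n, W ξ * ‖traj ξ t - xstar‖ ^ 2)
            + 2 * η ^ 2 * σ2 := by
      intro t ht
      set t0 : Fin T := ⟨t, ht⟩ with ht0
      set bb : EuclideanSpace ℝ (Fin d) → Fin n → ℝ := fun x i =>
        ‖x - xstar‖ ^ 2 - 2 * η * ⟪g i x, x - xstar⟫ + η ^ 2 * ‖g i x‖ ^ 2 with hbb
      have hpt : ∀ ξ, ‖traj ξ (t + 1) - xstar‖ ^ 2 ≤ bb (traj ξ t) (ξ t0) := by
        intro ξ
        have hmin : IsMinOn (fun z => ‖z - (traj ξ t - η • g (ξ t0) (traj ξ t))‖) X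
            (traj ξ (t + 1)) := hupdate ξ t0
        have hc := sgd_proj_contract hXcx (htrajX ξ (t + 1)) hmin xstar hxstarX
        have hexp2 : ‖(traj ξ t - η • g (ξ t0) (traj ξ t)) - xstar‖ ^ 2
            = bb (traj ξ t) (ξ t0) := by
          have e : (traj ξ t - η • g (ξ t0) (traj ξ t)) - xstar
              = (traj ξ t - xstar) - η • g (ξ t0) (traj ξ t) := by abel
          rw [e, norm_sub_sq_real, real_inner_smul_right, norm_smul,
            real_inner_comm, hbb]
          simp only [Real.norm_eq_abs, abs_of_pos hη]
          ring
        rw [← hexp2]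
        exact hc
      -- split the sum at coordinate t0
      set ee := Equiv.piSplitAt t0 (fun _ : Fin T => Fin n) with hee
      set V : ({ j // j ≠ t0 } → Fin n) → ℝ := fun ρ => ∏ s, prob (ρ s) with hV
      have hV0 : ∀ ρ, 0 ≤ V ρ := fun ρ => Finset.prod_nonneg fun s _ => (hprob0 _).le
      have hVsum : ∑ ρ : { j // j ≠ t0 } → Fin n, V ρ = 1 := by
        have h := Finset.prod_univ_sum (fun _ : { j // j ≠ t0 } => (Finset.univ : Finset (Fin n)))
          (fun _ i => prob i)
        rw [Fintype.piFinset_univ] at h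
        rw [hV, ← h]
        simp [hprob1]
      set xb : ({ j // j ≠ t0 } → Fin n) → EuclideanSpace ℝ (Fin d) :=
        fun ρ => traj (ee.symm (⟨0, hn⟩, ρ)) t with hxb
      have hxbX : ∀ ρ, xb ρ ∈ X := fun ρ => htrajX _ t
      have htrajeq : ∀ j ρ, traj (ee.symm (j, ρ)) t = xb ρ := by
        intro j ρ
        apply traj_agree t (le_of_lt ht)
        intro s hs
        have hne : s ≠ t0 := by
          intro hcon
          rw [hcon] at hs
          exact lt_irrefl t hs
        simp [hee, Equiv.piSplitAt_symm_apply, dif_neg hne]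
      have hcoordeq : ∀ j ρ, (ee.symm (j, ρ)) t0 = j := by
        intro j ρ
        simp [hee, Equiv.piSplitAt_symm_apply]
      have hWsplit : ∀ j ρ, W (ee.symm (j, ρ)) = prob j * V ρ := by
        intro j ρ
        have h1 : W (ee.symm (j, ρ)) = ∏ s, prob ((ee.symm (j, ρ)) s) := rfl
        rw [h1, ← Finset.mul_prod_erase Finset.univ _ (Finset.mem_univ t0), hcoordeq]
        congr 1
        rw [Finset.prod_subtype (p := fun s => s ≠ t0) (Finset.univ.erase t0)
          (fun s => by simp [Finset.mem_erase]) (fun s => prob ((ee.symm (j, ρ)) s))]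
        apply Finset.prod_congr rfl
        intro s _
        congr 1
        simp [hee, Equiv.piSplitAt_symm_apply, dif_neg s.2]
      have hsum_eq : ∀ (F : (Fin T → Fin n) → ℝ),
          (∑ ξ : Fin T → Fin n, F ξ)
            = ∑ p : Fin n × ({ j // j ≠ t0 } → Fin n), F (ee.symm p) :=
        fun F => (Equiv.sum_comp ee.symm F).symm
      have hEt : (∑ ξ : Fin T → Fin n, W ξ * ‖traj ξ t - xstar‖ ^ 2)
          = ∑ ρ, V ρ * ‖xb ρ - xstar‖ ^ 2 := by
        rw [hsum_eq (fun ξ => W ξ * ‖traj ξ t - xstar‖ ^ 2), Fintype.sum_prod_type]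
        have h3 : ∀ j ρ, W (ee.symm (j, ρ)) * ‖traj (ee.symm (j, ρ)) t - xstar‖ ^ 2
            = prob j * (V ρ * ‖xb ρ - xstar‖ ^ 2) := by
          intro j ρ
          rw [hWsplit, htrajeq]
          ring
        simp_rw [h3, ← Finset.mul_sum]
        rw [← Finset.sum_mul, hprob1, one_mul]
      have h1 : (∑ ξ : Fin T → Fin n, W ξ * ‖traj ξ (t + 1) - xstar‖ ^ 2)
          ≤ ∑ ξ : Fin T → Fin n, W ξ * bb (traj ξ t) (ξ t0) :=
        Finset.sum_le_sum fun ξ _ => mul_le_mul_of_nonneg_left (hpt ξ) (hW0 ξ)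
      have h2 : (∑ ξ : Fin T → Fin n, W ξ * bb (traj ξ t) (ξ t0))
          = ∑ ρ, V ρ * (∑ j, prob j * bb (xb ρ) j) := by
        rw [hsum_eq (fun ξ => W ξ * bb (traj ξ t) (ξ t0)), Fintype.sum_prod_type]
        have e1 : ∀ j ρ, W (ee.symm (j, ρ)) * bb (traj (ee.symm (j, ρ)) t) ((ee.symm (j, ρ)) t0)
            = prob j * (V ρ * bb (xb ρ) j) := by
          intro j ρ
          rw [hWsplit, htrajeq, hcoordeq]
          ring
        simp_rw [e1]
        rw [Finset.sum_comm]
        apply Finset.sum_congr rfl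
        intro ρ _
        rw [Finset.mul_sum]
        apply Finset.sum_congr rfl
        intro j _
        ring
      have hfinal : (∑ ρ, V ρ * (∑ j, prob j * bb (xb ρ) j))
          ≤ (1 - 2 * η * μ * (1 - η * supL)) * (∑ ρ, V ρ * ‖xb ρ - xstar‖ ^ 2)
            + 2 * η ^ 2 * σ2 := by
        calc ∑ ρ, V ρ * (∑ j, prob j * bb (xb ρ) j)
            ≤ ∑ ρ, V ρ * ((1 - 2 * η * μ * (1 - η * supL)) * ‖xb ρ - xstar‖ ^ 2
                + 2 * η ^ 2 * σ2) :=
              Finset.sum_le_sum fun ρ _ =>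
                mul_le_mul_of_nonneg_left (key (xb ρ) (hxbX ρ)) (hV0 ρ)
          _ = (1 - 2 * η * μ * (1 - η * supL)) * (∑ ρ, V ρ * ‖xb ρ - xstar‖ ^ 2)
                + 2 * η ^ 2 * σ2 * (∑ ρ, V ρ) := by
              rw [Finset.mul_sum, Finset.mul_sum, ← Finset.sum_add_distrib]
              apply Finset.sum_congr rfl
              intro ρ _
              ring
          _ = _ := by rw [hVsum, mul_one]
      rw [hEt]
      exact (h1.trans_eq h2).trans hfinal
    -- unroll the recursion
    have hgeom : ∀ t, t ≤ T →
        (∑ ξ : Fin T → Fin n, W ξ * ‖traj ξ t - xstar‖ ^ 2)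
          ≤ (1 - 2 * η * μ * (1 - η * supL)) ^ t * ‖x0 - xstar‖ ^ 2
            + (∑ k ∈ Finset.range t, (1 - 2 * η * μ * (1 - η * supL)) ^ k)
              * (2 * η ^ 2 * σ2) := by
      intro t
      induction t with
      | zero =>
        intro _
        have hz : (∑ ξ : Fin T → Fin n, W ξ * ‖traj ξ 0 - xstar‖ ^ 2)
            = ‖x0 - xstar‖ ^ 2 := by
          simp_rw [htraj0]
          rw [← Finset.sum_mul, hWsum, one_mul]
        rw [hz]
        simp
      | succ t ih =>
        intro ht
        have ht' : t < T := Nat.lt_of_succ_le ht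
        have hrec := hstep t ht'
        have hih := ih (le_of_lt ht')
        have hmul := mul_le_mul_of_nonneg_left hih hr0
        calc (∑ ξ : Fin T → Fin n, W ξ * ‖traj ξ (t + 1) - xstar‖ ^ 2)
            ≤ (1 - 2 * η * μ * (1 - η * supL))
                * (∑ ξ : Fin T → Fin n, W ξ * ‖traj ξ t - xstar‖ ^ 2)
              + 2 * η ^ 2 * σ2 := hrec
          _ ≤ (1 - 2 * η * μ * (1 - η * supL))
                * ((1 - 2 * η * μ * (1 - η * supL)) ^ t * ‖x0 - xstar‖ ^ 2
                  + (∑ k ∈ Finset.range t, (1 - 2 * η * μ * (1 - η * supL)) ^ k)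
                    * (2 * η ^ 2 * σ2))
              + 2 * η ^ 2 * σ2 := by linarith [hmul]
          _ = (1 - 2 * η * μ * (1 - η * supL)) ^ (t + 1) * ‖x0 - xstar‖ ^ 2
              + ((1 - 2 * η * μ * (1 - η * supL))
                  * (∑ k ∈ Finset.range t, (1 - 2 * η * μ * (1 - η * supL)) ^ k) + 1)
                * (2 * η ^ 2 * σ2) := by ring
          _ = _ := by rw [geom_sum_succ]
    have hfin := hgeom T (le_refl T)
    have hr1 : (1 - 2 * η * μ * (1 - η * supL)) < 1 := by nlinarith [mul_pos hη hμ]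
    have h1r : (0:ℝ) < 1 - (1 - 2 * η * μ * (1 - η * supL)) := by linarith
    have hgb : (∑ k ∈ Finset.range T, (1 - 2 * η * μ * (1 - η * supL)) ^ k)
        ≤ 1 / (1 - (1 - 2 * η * μ * (1 - η * supL))) := by
      rw [geom_sum_eq (ne_of_lt hr1)]
      have heq : ((1 - 2 * η * μ * (1 - η * supL)) ^ T - 1)
            / ((1 - 2 * η * μ * (1 - η * supL)) - 1)
          = (1 - (1 - 2 * η * μ * (1 - η * supL)) ^ T)
            / (1 - (1 - 2 * η * μ * (1 - η * supL))) := by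
        rw [← neg_sub (1:ℝ) ((1 - 2 * η * μ * (1 - η * supL)) ^ T),
          ← neg_sub (1:ℝ) (1 - 2 * η * μ * (1 - η * supL)), neg_div_neg_eq]
      rw [heq]
      have hnum : (1 - (1 - 2 * η * μ * (1 - η * supL)) ^ T) ≤ 1 := by
        nlinarith [pow_nonneg hr0 T]
      exact (div_le_div_iff_of_pos_right h1r).2 hnum
    have hC0 : (0:ℝ) ≤ 2 * η ^ 2 * σ2 := by positivity
    have hgs : (∑ k ∈ Finset.range T, (1 - 2 * η * μ * (1 - η * supL)) ^ k) * (2 * η ^ 2 * σ2)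
        ≤ η * σ2 / (μ * (1 - η * supL)) := by
      have := mul_le_mul_of_nonneg_right hgb hC0
      apply le_trans this
      have hde : 1 - (1 - 2 * η * μ * (1 - η * supL)) = 2 * η * μ * (1 - η * supL) := by ring
      rw [hde]
      rw [div_mul_eq_mul_div, one_mul, div_le_div_iff₀ (by positivity) (by positivity)]
      ring_nf
      nlinarith [sq_nonneg η]
    linarith [hfin, hgs]
end

section
/- Fix d ≥ 1 and p ∈ [1,∞). For any finite set G ⊆ ℝ^d with |G| = m ≥ 2, the number of distinct subsets of the form Range(G,x,r) = { a ∈ G : |⟨a, x⟩|^p ≤ r }, taken over all x ∈ ℝ^d and all r ≥ 0, is at most m^{d+1}. -/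
open Matrix Finset

/-!
Since `|t| ^ p ≤ r ↔ |t| ≤ r ^ p⁻¹`, the ranges are the slabs `{a ∈ G | |a ⬝ᵥ x| ≤ s}`, `s ≥ 0`.
Such a slab consists of the `a ∈ G` for which neither `a` nor `-a` lies in the halfspace pattern
`P = {c ∈ G ∪ -G | s < c ⬝ᵥ x}`. These patterns are the positivity patterns of the linear forms
`(x, s) ↦ c ⬝ᵥ x - s` on a space of dimension `d + 1`, so their VC dimension is at most `d + 1` and
the Sauer–Shelah lemma bounds their number by `∑ i ≤ d + 1, (2m).choose i`. Replacing `x` by `-x`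
turns `P` into `-P` without changing the slab, and `-P ≠ P` unless `P = ∅`; hence there are at most
half as many slabs as nonempty patterns, plus one, which is at most `m ^ (d + 1)` once `d ≥ 2`.
For `d = 1` the slabs form a chain, so there are at most `m + 1` of them.
-/

theorem Finset.two_mul_card_image_le_card {α β : Type*} [DecidableEq β] {s : Finset α}
    (f : α → β) (σ : α → α) (hσ : ∀ a ∈ s, σ a ∈ s ∧ σ a ≠ a ∧ f (σ a) = f a) :
    2 * #(s.image f) ≤ #s := by
  classical
  refine mul_card_image_le_card s 2 fun b hb => ?_
  obtain ⟨a, ha, rfl⟩ := mem_image.1 hb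
  obtain ⟨hσs, hσa, hfσ⟩ := hσ a ha
  calc 2 = #{σ a, a} := (card_pair hσa).symm
    _ ≤ #{x ∈ s | f x = f a} := card_le_card <| by simp [insert_subset_iff, hσs, ha, hfσ]

theorem Finset.card_le_card_add_one_of_isChain {α : Type*} {s : Finset α}
    {𝒜 : Finset (Finset α)} (h𝒜 : ∀ t ∈ 𝒜, t ⊆ s)
    (hchain : IsChain (· ⊆ ·) (𝒜 : Set (Finset α))) : #𝒜 ≤ #s + 1 := by
  have hinj : Set.InjOn card (𝒜 : Set (Finset α)) := fun t ht u hu htu => by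
    rcases hchain.total ht hu with h | h
    · exact eq_of_subset_of_card_le h htu.ge
    · exact (eq_of_subset_of_card_le h htu.le).symm
  simpa using card_le_card_of_injOn card
    (fun t ht => mem_range.2 (Nat.lt_succ_of_le (card_le_card (h𝒜 t ht)))) hinj

theorem Finset.card_le_sum_range_choose_of_vcDim_le {α : Type*} [DecidableEq α] {s : Finset α}
    {𝒜 : Finset (Finset α)} {k : ℕ} (h𝒜 : ∀ t ∈ 𝒜, t ⊆ s) (hk : 𝒜.vcDim ≤ k) :
    #𝒜 ≤ ∑ i ∈ range (k + 1), (#s).choose i := by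
  simp_rw [← card_powersetCard]
  refine (card_le_card_shatterer 𝒜).trans <| (card_le_card fun t ht => ?_).trans card_biUnion_le
  have ht := mem_shatterer.1 ht
  obtain ⟨u, hu, htu⟩ := ht.exists_superset
  exact mem_biUnion.2 ⟨#t, mem_range.2 (Nat.lt_succ_of_le (ht.card_le_vcDim.trans hk)),
    mem_powersetCard.2 ⟨htu.trans (h𝒜 u hu), rfl⟩⟩

theorem nonpos_of_sum_mul_eq_zero_of_pos_iff {ι 𝕜 : Type*} [Ring 𝕜] [LinearOrder 𝕜]
    [IsStrictOrderedRing 𝕜] {A : Finset ι} {c y : ι → 𝕜} (hsum : ∑ i ∈ A, c i * y i = 0)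
    (hpos : ∀ i ∈ A, 0 < c i ↔ 0 < y i) : ∀ i ∈ A, c i ≤ 0 := by
  have hterm : ∀ i ∈ A, 0 ≤ c i * y i := fun i hi => by
    rcases lt_or_ge 0 (c i) with hc | hc
    · exact (mul_pos hc ((hpos i hi).1 hc)).le
    · exact mul_nonneg_of_nonpos_of_nonpos hc (not_lt.1 fun hy => hc.not_gt ((hpos i hi).2 hy))
  intro i hi
  by_contra! hc
  exact (mul_pos hc ((hpos i hi).1 hc)).ne' ((sum_eq_zero_iff_of_nonneg hterm).1 hsum i hi)

theorem Finset.vcDim_le_finrank_of_forall_eq_filter_pos {α 𝕜 E : Type*} [DecidableEq α]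
    [Field 𝕜] [LinearOrder 𝕜] [IsStrictOrderedRing 𝕜] [AddCommGroup E] [Module 𝕜 E]
    [FiniteDimensional 𝕜 E] (φ : α → Module.Dual 𝕜 E) (s : Finset α) {𝒜 : Finset (Finset α)}
    (h𝒜 : ∀ t ∈ 𝒜, ∃ θ, t = {e ∈ s | 0 < φ e θ}) : 𝒜.vcDim ≤ Module.finrank 𝕜 E := by
  refine Finset.sup_le fun A hA => ?_
  have hA := mem_shatterer.1 hA
  have hAs : A ⊆ s := by
    obtain ⟨t, ht, hAt⟩ := hA.exists_superset
    obtain ⟨θ, rfl⟩ := h𝒜 t ht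
    exact hAt.trans (filter_subset _ _)
  suffices LinearIndepOn 𝕜 φ (A : Set α) by
    rw [← Subspace.dual_finrank_eq]
    simpa using this.linearIndependent.fintype_card_le_finrank
  by_contra hdep
  obtain ⟨c, hc, e, heA, hce⟩ := not_linearIndepOn_finset_iff.1 hdep
  wlog hpos : 0 < c e generalizing c
  · refine this (-c) (by simp [neg_smul, sum_neg_distrib, hc]) (neg_ne_zero.2 hce) ?_
    exact neg_pos.2 (lt_of_le_of_ne (not_lt.1 hpos) hce)
  obtain ⟨t, ht, hAt⟩ := hA (filter_subset (fun e => 0 < c e) A)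
  obtain ⟨θ, rfl⟩ := h𝒜 t ht
  have hsum : ∑ i ∈ A, c i * φ i θ = 0 := by
    simpa using congrArg (fun ψ : Module.Dual 𝕜 E => ψ θ) hc
  have hsign : ∀ i ∈ A, 0 < c i ↔ 0 < φ i θ := fun i hi => by
    have := congrArg (i ∈ ·) hAt
    simp only [mem_inter, mem_filter, hi, hAs hi, true_and, eq_iff_iff] at this
    exact this.symm
  exact hpos.not_ge (nonpos_of_sum_mul_eq_zero_of_pos_iff hsum hsign e heA)

theorem Nat.two_pow_le_factorial {n : ℕ} (hn : 4 ≤ n) : 2 ^ n ≤ n.factorial := by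
  induction n, hn using Nat.le_induction with
  | base => decide
  | succ n hn ih =>
    rw [pow_succ, Nat.factorial_succ, mul_comm (n + 1)]
    exact Nat.mul_le_mul ih (by omega)

theorem Nat.choose_two_mul_le_pow {m k : ℕ} (hk : 4 ≤ k) : (2 * m).choose k ≤ m ^ k := by
  have h := Nat.descFactorial_le_pow (2 * m) k
  rw [Nat.descFactorial_eq_factorial_mul_choose, mul_pow] at h
  exact Nat.le_of_mul_le_mul_left
    ((Nat.mul_le_mul_right _ (Nat.two_pow_le_factorial hk)).trans h) (by positivity)

theorem Nat.sum_range_choose_two_mul_add_one_le {m k : ℕ} (hm : 2 ≤ m) (hk : 3 ≤ k) :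
    ∑ i ∈ range (k + 1), (2 * m).choose i + 1 ≤ 2 * m ^ k := by
  induction k, hk using Nat.le_induction with
  | base =>
    obtain ⟨j, rfl⟩ : ∃ j, m = j + 2 := ⟨m - 2, by omega⟩
    have h2 := Nat.descFactorial_eq_factorial_mul_choose (2 * (j + 2)) 2
    have h3 := Nat.descFactorial_eq_factorial_mul_choose (2 * (j + 2)) 3
    simp only [Nat.descFactorial_succ, Nat.descFactorial_zero, tsub_zero, mul_one,
      Nat.factorial] at h2 h3
    rw [show 2 * (j + 2) - 1 = 2 * j + 3 by omega] at h2 h3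
    rw [show 2 * (j + 2) - 2 = 2 * j + 2 by omega] at h3
    simp only [sum_range_succ, range_one, sum_singleton, Nat.choose_zero_right,
      Nat.choose_one_right]
    nlinarith
  | succ k hk ih =>
    have hchoose := Nat.choose_two_mul_le_pow (m := m) (show 4 ≤ k + 1 by omega)
    have hpow : 2 * m ^ k ≤ m ^ (k + 1) := by
      rw [pow_succ, mul_comm]
      exact Nat.mul_le_mul_left _ hm
    rw [sum_range_succ]
    omega

section Slabs

open scoped Pointwise

variable {d : ℕ}

noncomputable def slab (G : Finset (Fin d → ℝ)) (x : Fin d → ℝ) (s : ℝ) : Finset (Fin d → ℝ) :=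
  {a ∈ G | |a ⬝ᵥ x| ≤ s}

open Classical in
noncomputable def slabs (G : Finset (Fin d → ℝ)) : Finset (Finset (Fin d → ℝ)) :=
  {S ∈ G.powerset | ∃ x s, 0 ≤ s ∧ S = slab G x s}

noncomputable def halfspacePattern (H : Finset (Fin d → ℝ)) (x : Fin d → ℝ) (s : ℝ) :
    Finset (Fin d → ℝ) :=
  {c ∈ H | s < c ⬝ᵥ x}

open Classical in
noncomputable def halfspacePatterns (H : Finset (Fin d → ℝ)) : Finset (Finset (Fin d → ℝ)) :=
  {P ∈ H.powerset | ∃ x s, 0 ≤ s ∧ P = halfspacePattern H x s}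

open Classical in
noncomputable def slabOfPattern (G P : Finset (Fin d → ℝ)) : Finset (Fin d → ℝ) :=
  {a ∈ G | a ∉ P ∧ -a ∉ P}

theorem slabOfPattern_halfspacePattern (G : Finset (Fin d → ℝ)) (x : Fin d → ℝ) (s : ℝ) :
    slabOfPattern G (halfspacePattern (G ∪ -G) x s) = slab G x s := by
  ext a
  simp only [slabOfPattern, slab, halfspacePattern, mem_filter, mem_union, mem_neg', neg_neg,
    neg_dotProduct, abs_le', not_and, not_lt]
  constructor
  · rintro ⟨ha, h₁, h₂⟩
    exact ⟨ha, h₁ (.inl ha), h₂ (.inr ha)⟩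
  · rintro ⟨ha, h₁, h₂⟩
    exact ⟨ha, fun _ => h₁, fun _ => h₂⟩

theorem halfspacePattern_neg {H : Finset (Fin d → ℝ)} (hH : -H = H) (x : Fin d → ℝ) (s : ℝ) :
    halfspacePattern H (-x) s = -halfspacePattern H x s := by
  ext c
  rw [mem_neg']
  simp only [halfspacePattern, mem_filter, dotProduct_neg, neg_dotProduct]
  rw [← mem_neg', hH]

theorem slabOfPattern_neg (G P : Finset (Fin d → ℝ)) :
    slabOfPattern G (-P) = slabOfPattern G P := by
  ext a
  simp only [slabOfPattern, mem_filter, mem_neg', neg_neg, and_comm (a := -a ∉ P)]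

theorem halfspacePattern_eq_empty_of_neg_eq {H : Finset (Fin d → ℝ)} {x : Fin d → ℝ} {s : ℝ}
    (hs : 0 ≤ s) (h : -halfspacePattern H x s = halfspacePattern H x s) :
    halfspacePattern H x s = ∅ := by
  refine eq_empty_of_forall_notMem fun c hc => ?_
  have hc' : -c ∈ halfspacePattern H x s := by rw [← mem_neg', h]; exact hc
  simp only [halfspacePattern, mem_filter, neg_dotProduct] at hc hc'
  linarith [hc.2, hc'.2]

theorem slabs_subset_image_slabOfPattern (G : Finset (Fin d → ℝ)) :
    slabs G ⊆ (halfspacePatterns (G ∪ -G)).image (slabOfPattern G) := by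
  classical
  intro S hS
  obtain ⟨x, s, hs, rfl⟩ := (mem_filter.1 hS).2
  refine mem_image.2 ⟨_, mem_filter.2 ⟨mem_powerset.2 (filter_subset _ _), x, s, hs, rfl⟩, ?_⟩
  exact slabOfPattern_halfspacePattern G x s

theorem two_mul_card_image_slabOfPattern_le (G : Finset (Fin d → ℝ)) {H : Finset (Fin d → ℝ)}
    (hH : -H = H) :
    2 * #((halfspacePatterns H).image (slabOfPattern G)) ≤ #(halfspacePatterns H) + 1 := by
  classical
  set 𝒯 := halfspacePatterns H
  have hmem : ∀ {P}, P ∈ 𝒯 ↔ ∃ x s, 0 ≤ s ∧ P = halfspacePattern H x s := fun {P} => by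
    simp only [𝒯, halfspacePatterns, mem_filter, mem_powerset, and_iff_right_iff_imp]
    rintro ⟨x, s, -, rfl⟩
    exact filter_subset _ _
  have hempty : ∅ ∈ 𝒯 := hmem.2 ⟨0, 0, le_rfl, by simp [halfspacePattern]⟩
  have hflip : 2 * #((𝒯.erase ∅).image (slabOfPattern G)) ≤ #(𝒯.erase ∅) := by
    refine two_mul_card_image_le_card _ Neg.neg fun P hP => ?_
    obtain ⟨hP, hP𝒯⟩ := mem_erase.1 hP
    obtain ⟨x, s, hs, rfl⟩ := hmem.1 hP𝒯
    refine ⟨mem_erase.2 ⟨mt neg_eq_empty.1 hP, hmem.2 ⟨-x, s, hs, ?_⟩⟩,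
      fun h => hP (halfspacePattern_eq_empty_of_neg_eq hs h), slabOfPattern_neg G _⟩
    exact (halfspacePattern_neg hH x s).symm
  have hinsert : 𝒯.image (slabOfPattern G) =
      insert (slabOfPattern G ∅) ((𝒯.erase ∅).image (slabOfPattern G)) := by
    rw [← image_insert, insert_erase hempty]
  rw [hinsert, ← card_erase_add_one hempty]
  have := card_insert_le (slabOfPattern G ∅) ((𝒯.erase ∅).image (slabOfPattern G))
  omega

theorem vcDim_halfspacePatterns_le (H : Finset (Fin d → ℝ)) :
    (halfspacePatterns H).vcDim ≤ d + 1 := by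
  classical
  let φ (c : Fin d → ℝ) : Module.Dual ℝ ((Fin d → ℝ) × ℝ) :=
    dotProductBilin ℝ ℝ c ∘ₗ LinearMap.fst ℝ _ ℝ - LinearMap.snd ℝ _ ℝ
  refine (vcDim_le_finrank_of_forall_eq_filter_pos φ H fun P hP => ?_).trans_eq (by simp)
  obtain ⟨x, s, -, rfl⟩ := (mem_filter.1 hP).2
  exact ⟨(x, s), by simp [halfspacePattern, φ]⟩

theorem card_slabs_le {G : Finset (Fin d → ℝ)} (hd : 2 ≤ d) (hG : 2 ≤ #G) :
    #(slabs G) ≤ #G ^ (d + 1) := by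
  classical
  have hsymm : -(G ∪ -G) = G ∪ -G := by ext; simp [mem_neg', or_comm]
  have hcard : #(G ∪ -G) ≤ 2 * #G := (card_union_le _ _).trans (by rw [card_neg]; omega)
  have hpatterns :
      #(halfspacePatterns (G ∪ -G)) ≤ ∑ i ∈ range (d + 1 + 1), (2 * #G).choose i :=
    (card_le_sum_range_choose_of_vcDim_le (fun P hP => mem_powerset.1 (mem_filter.1 hP).1)
      (vcDim_halfspacePatterns_le _)).trans (sum_le_sum fun i _ => Nat.choose_le_choose i hcard)
  have hhalf := two_mul_card_image_slabOfPattern_le G hsymm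
  have hslabs := card_le_card (slabs_subset_image_slabOfPattern G)
  have := Nat.sum_range_choose_two_mul_add_one_le hG (show 3 ≤ d + 1 by omega)
  omega

theorem isChain_slab (G : Finset (Fin 1 → ℝ)) :
    IsChain (· ⊆ ·) {S | ∃ x s, S = slab G x s} := by
  rintro _ ⟨x, s, rfl⟩ _ ⟨y, t, rfl⟩ -
  by_contra! h
  simp only [not_subset] at h
  obtain ⟨⟨a, ha₁, ha₂⟩, ⟨b, hb₂, hb₁⟩⟩ := h
  simp only [slab, mem_filter, not_and, not_le, dotProduct, Fin.sum_univ_one, abs_mul] at *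
  have hab : |a 0| < |b 0| :=
    lt_of_mul_lt_mul_right (by linarith [hb₁ hb₂.1]) (abs_nonneg (x 0))
  have hba : |b 0| < |a 0| :=
    lt_of_mul_lt_mul_right (by linarith [ha₂ ha₁.1]) (abs_nonneg (y 0))
  exact hab.not_gt hba

theorem card_slabs_le_of_dim_one (G : Finset (Fin 1 → ℝ)) : #(slabs G) ≤ #G + 1 := by
  classical
  refine card_le_card_add_one_of_isChain (fun S hS => mem_powerset.1 (mem_filter.1 hS).1) ?_
  refine (isChain_slab G).mono fun S hS => ?_
  obtain ⟨x, s, -, rfl⟩ := (mem_filter.1 hS).2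
  exact ⟨x, s, rfl⟩

theorem ncard_setOf_rpow_le_card_slabs (G : Finset (Fin d → ℝ)) {p : ℝ} (hp : 0 < p) :
    Set.ncard {S : Set (Fin d → ℝ) | ∃ (x : Fin d → ℝ) (r : ℝ), 0 ≤ r ∧
      S = {a ∈ (G : Set (Fin d → ℝ)) | |a ⬝ᵥ x| ^ p ≤ r}} ≤ #(slabs G) := by
  classical
  refine (Set.ncard_le_ncard (t := ((slabs G).image ((↑) : Finset _ → Set (Fin d → ℝ)) : Set _))
    ?_ (finite_toSet _)).trans ?_
  · rintro _ ⟨x, r, hr, rfl⟩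
    refine mem_coe.2 (mem_image.2 ⟨slab G x (r ^ p⁻¹), mem_filter.2 ⟨mem_powerset.2
      (filter_subset _ _), x, _, Real.rpow_nonneg hr _, rfl⟩, ?_⟩)
    ext a
    simp [slab, Real.le_rpow_inv_iff_of_pos (abs_nonneg _) hr hp]
  · rw [Set.ncard_coe_finset]
    exact card_image_le

end Slabs

theorem shattering_bound_for_lp_ranges
    (d : ℕ) (hd : 1 ≤ d) (p : ℝ) (hp : 1 ≤ p)
    (G : Finset (Fin d → ℝ)) (m : ℕ) (hm : G.card = m) (hm2 : 2 ≤ m) :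
    Set.ncard {S : Set (Fin d → ℝ) | ∃ (x : Fin d → ℝ) (r : ℝ), 0 ≤ r ∧
        S = {a ∈ (G : Set (Fin d → ℝ)) | |a ⬝ᵥ x| ^ p ≤ r}} ≤ m ^ (d + 1) := by
  calc _ ≤ #(slabs G) := ncard_setOf_rpow_le_card_slabs G (by linarith)
    _ ≤ m ^ (d + 1) := by
      subst hm
      obtain rfl | hd := hd.eq_or_lt
      · exact (card_slabs_le_of_dim_one G).trans (by rw [pow_succ, pow_one]; nlinarith)
      · exact card_slabs_le hd hm2
end

section
/- Let d ≥ 2 be even, and let a_1,…,a_n ∈ {0,1}^d enumerate all vectors with exactly d/2 coordinates equal to 1, so that n = C(d, d/2). Define f_i(x) = max(⟨a_i, x⟩, 0). Then for every i ∈ {1,…,n} there exists x ∈ ℝ^d with f_i(x) = 1 and f_j(x) = 0 for all j ≠ i (take x_k = 2/d if (a_i)_k = 1 and x_k = −d otherwise); consequently each sensitivity s_i = sup{ f_i(x)/Σ_{j=1}^n f_j(x) : Σ_j f_j(x) > 0 } satisfies s_i ≥ 1, and the total sensitivity of the family {f_i}_{i=1}^n is at least C(d, d/2). -/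
/-!
For a 0/1 vector `a` of weight `m`, the vector `x` equal to `1/m` on the support of `a` and to `-1`
off it has `⟨a, x⟩ = 1`, while any other 0/1 vector `b` of the same weight has a coordinate in
which it is `1` and `a` is `0`, so `⟨b, x⟩ ≤ m/m - 1 = 0`. Hence every hinge function `f_i` can be
isolated: `f_i(x) = 1` and `f_j(x) = 0` for `j ≠ i`. At such an `x` the sensitivity ratio of `f_i`
is `1`, so each sensitivity is at least `1` and their sum at least `n = C(d, d/2)`.
-/

open Matrix Finset

section BinaryVectors

variable {ι : Type*}

lemma dotProduct_eq_sum_filter_eq_one [Fintype ι] {v : ι → ℝ} (hv : ∀ k, v k = 0 ∨ v k = 1)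
    (x : ι → ℝ) :
    v ⬝ᵥ x = ∑ k ∈ univ.filter (v · = 1), x k := by
  rw [dotProduct, sum_filter]
  refine sum_congr rfl fun k _ => ?_
  rcases hv k with h | h <;> simp [h]

lemma eq_of_filter_eq_one_eq [Fintype ι] {v w : ι → ℝ} (hv : ∀ k, v k = 0 ∨ v k = 1)
    (hw : ∀ k, w k = 0 ∨ w k = 1) (h : univ.filter (v · = 1) = univ.filter (w · = 1)) :
    v = w := by
  funext k
  have hk : v k = 1 ↔ w k = 1 := by simpa using congrArg (k ∈ ·) h
  rcases hv k with h₁ | h₁ <;> rcases hw k with h₂ | h₂ <;> simp_all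

noncomputable def separatingVector [DecidableEq ι] (S : Finset ι) : ι → ℝ :=
  fun k => if k ∈ S then ((#S : ℕ) : ℝ)⁻¹ else -1

lemma sum_separatingVector_self [DecidableEq ι] {S : Finset ι} (hS : S.Nonempty) :
    ∑ k ∈ S, separatingVector S k = 1 := by
  simp only [separatingVector]
  rw [sum_congr rfl fun k hk => if_pos hk, sum_const, nsmul_eq_mul]
  exact mul_inv_cancel₀ (by exact_mod_cast hS.card_pos.ne')

lemma sum_separatingVector_nonpos [DecidableEq ι] {S T : Finset ι} (hTS : T ≠ S)
    (hcard : #T = #S) :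
    ∑ k ∈ T, separatingVector S k ≤ 0 := by
  have hsplit : ∑ k ∈ T, separatingVector S k
      = ((#(T.filter (· ∈ S)) : ℕ) : ℝ) * ((#S : ℕ) : ℝ)⁻¹ - #(T.filter (· ∉ S)) := by
    simp only [separatingVector]
    rw [sum_ite, sum_const, sum_const, nsmul_eq_mul, nsmul_eq_mul]
    ring
  have hinter : ((#(T.filter (· ∈ S)) : ℕ) : ℝ) * ((#S : ℕ) : ℝ)⁻¹ ≤ 1 := by
    have hle : #(T.filter (· ∈ S)) ≤ #S := card_le_card fun k hk => (mem_filter.mp hk).2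
    rcases (#S).eq_zero_or_pos with h0 | hpos
    · simp [h0]
    · rw [← div_eq_mul_inv, div_le_one (by exact_mod_cast hpos)]
      exact_mod_cast hle
  -- `T ⊆ S` together with `#T = #S` would force `T = S`.
  have hdiff : 1 ≤ #(T.filter (· ∉ S)) := by
    rw [Nat.one_le_iff_ne_zero, Ne, card_eq_zero, filter_eq_empty_iff, not_forall]
    by_contra! hsub
    exact hTS (eq_of_subset_of_card_le hsub hcard.ge)
  rw [hsplit]
  have : (1 : ℝ) ≤ #(T.filter (· ∉ S)) := by exact_mod_cast hdiff
  linarith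

lemma exists_dotProduct_eq_one_and_nonpos [Fintype ι] [DecidableEq ι] {κ : Type*} {a : κ → ι → ℝ}
    (ha01 : ∀ i k, a i k = 0 ∨ a i k = 1) (hainj : Function.Injective a) {m : ℕ} (hm : 0 < m)
    (hacard : ∀ i, #(univ.filter (a i · = 1)) = m) (i : κ) :
    ∃ x : ι → ℝ, a i ⬝ᵥ x = 1 ∧ ∀ j, j ≠ i → a j ⬝ᵥ x ≤ 0 := by
  refine ⟨separatingVector (univ.filter (a i · = 1)), ?_, fun j hji => ?_⟩
  · rw [dotProduct_eq_sum_filter_eq_one (ha01 i)]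
    exact sum_separatingVector_self (card_pos.mp (hacard i ▸ hm))
  · rw [dotProduct_eq_sum_filter_eq_one (ha01 j)]
    refine sum_separatingVector_nonpos (fun h => hji (hainj ?_))
      ((hacard j).trans (hacard i).symm)
    exact eq_of_filter_eq_one_eq (ha01 j) (ha01 i) h

end BinaryVectors

lemma one_le_sSup_ratio {κ X : Type*} [Fintype κ] {f : κ → X → ℝ}
    (hf : ∀ j x, 0 ≤ f j x) {i : κ} {x : X} (hi : 0 < f i x) (hj : ∀ j, j ≠ i → f j x = 0) :
    1 ≤ sSup {v | ∃ x : X, 0 < ∑ j, f j x ∧ v = f i x / ∑ j, f j x} := by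
  have hsum : ∑ j, f j x = f i x := sum_eq_single i (fun j _ hji => hj j hji) (by simp)
  refine le_csSup ⟨1, ?_⟩ ⟨x, hsum ▸ hi, by rw [hsum, div_self hi.ne']⟩
  rintro v ⟨y, hy, rfl⟩
  rw [div_le_one hy]
  exact single_le_sum (fun j _ => hf j y) (mem_univ i)

theorem hinge_loss_total_sensitivity_lower_bound_general
    (d n : ℕ) (hd2 : 2 ≤ d)
    (a : Fin n → (Fin d → ℝ))
    (ha01 : ∀ i k, a i k = 0 ∨ a i k = 1)
    (hacard : ∀ i, (Finset.univ.filter (fun k => a i k = 1)).card = d / 2)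
    (hainj : Function.Injective a)
    (hn : n = Nat.choose d (d / 2))
    (f : Fin n → (Fin d → ℝ) → ℝ) (hf : ∀ i x, f i x = max (a i ⬝ᵥ x) 0)
    (s : Fin n → ℝ)
    (hs : ∀ i, s i = sSup {v | ∃ x : Fin d → ℝ, 0 < ∑ j, f j x ∧ v = f i x / ∑ j, f j x}) :
    (∀ i, ∃ x : Fin d → ℝ, f i x = 1 ∧ ∀ j, j ≠ i → f j x = 0) ∧
    (∀ i, 1 ≤ s i) ∧
    ((Nat.choose d (d / 2) : ℝ) ≤ ∑ i, s i) := by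
  have isolate : ∀ i, ∃ x : Fin d → ℝ, f i x = 1 ∧ ∀ j, j ≠ i → f j x = 0 := fun i => by
    obtain ⟨x, hi, hj⟩ := exists_dotProduct_eq_one_and_nonpos ha01 hainj (by omega) hacard i
    exact ⟨x, by simp [hf, hi], fun j hji => by simp [hf, hj j hji]⟩
  have one_le_s : ∀ i, 1 ≤ s i := fun i => by
    obtain ⟨x, hi, hj⟩ := isolate i
    rw [hs]
    exact one_le_sSup_ratio (fun j x => hf j x ▸ le_max_right _ _) (hi ▸ one_pos) hj
  refine ⟨isolate, one_le_s, ?_⟩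
  calc (Nat.choose d (d / 2) : ℝ) = ∑ _i : Fin n, (1 : ℝ) := by simp [hn]
    _ ≤ ∑ i, s i := sum_le_sum fun i _ => one_le_s i

theorem hinge_loss_total_sensitivity_lower_bound
    (d n : ℕ) (hd2 : 2 ≤ d) (hdeven : Even d)
    (a : Fin n → (Fin d → ℝ))
    (ha01 : ∀ i k, a i k = 0 ∨ a i k = 1)
    (hacard : ∀ i, (Finset.univ.filter (fun k => a i k = 1)).card = d / 2)
    (hainj : Function.Injective a)
    (hasurj : ∀ v : Fin d → ℝ, (∀ k, v k = 0 ∨ v k = 1) →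
        (Finset.univ.filter (fun k => v k = 1)).card = d / 2 → ∃ i, a i = v)
    (hn : n = Nat.choose d (d / 2))
    (f : Fin n → (Fin d → ℝ) → ℝ) (hf : ∀ i x, f i x = max (a i ⬝ᵥ x) 0)
    (s : Fin n → ℝ)
    (hs : ∀ i, s i = sSup {v | ∃ x : Fin d → ℝ, 0 < ∑ j, f j x ∧ v = f i x / ∑ j, f j x}) :
    (∀ i, ∃ x : Fin d → ℝ, f i x = 1 ∧ ∀ j, j ≠ i → f j x = 0) ∧
    (∀ i, 1 ≤ s i) ∧
    ((Nat.choose d (d / 2) : ℝ) ≤ ∑ i, s i) :=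
  hinge_loss_total_sensitivity_lower_bound_general d n hd2 a ha01 hacard hainj hn f hf s hs
end
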